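/- arXiv:1507.03385 — 11 statements merged into one kernel-verified Lean document; each statement's English description precedes it below -/
import Mathlib

section
/- Let g be the real Lie algebra with complex structure defined by a basis of (1,0)-forms {ω¹,ω²,ω³} satisfying dω¹ = A ω¹∧ω³ + B ω¹∧ω̄³, dω² = C ω²∧ω³ + D ω²∧ω̄³, dω³ = 0 for complex constants A,B,C,D. Then g is unimodular (i.e. the trace of every adjoint map ad_X vanishes) if and only if A + conj(B) + C + conj(D) = 0. -/
/-!
The linear form `x ↦ tr (ad x)` vanishes iff it vanishes on the basis. Every bracket with
`Z₃ = b 2` or `Z̄₃ = b 5` is diagonal in the basis and all other brackets vanish, so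
`ad Z₃` and `ad Z̄₃` are diagonal with traces `A + C + conj B + conj D` and its conjugate,
while every other `ad (b i)` has image in `ℂ • b i` and kills `b i`, hence has zero diagonal.
-/

namespace LinearMap

variable {R M ι : Type*} [CommRing R] [AddCommGroup M] [Module R M] [Fintype ι] [DecidableEq ι]

theorem trace_eq_sum_basis_repr (b : Module.Basis ι R M) (f : Module.End R M) :
    trace R M f = ∑ i, b.repr (f (b i)) i := by
  simp [trace_eq_matrix_trace R b f, Matrix.trace, toMatrix_apply]

theorem trace_eq_sum_of_apply_basis_eq_smul (b : Module.Basis ι R M) {f : Module.End R M}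
    {c : ι → R} (hf : ∀ i, f (b i) = c i • b i) : trace R M f = ∑ i, c i := by
  simp [trace_eq_sum_basis_repr b, hf]

end LinearMap

namespace LieAlgebra

variable {R L ι : Type*} [CommRing R] [LieRing L] [LieAlgebra R L] [Fintype ι]

theorem forall_trace_ad_eq_zero_iff (b : Module.Basis ι R L) :
    (∀ x : L, LinearMap.trace R L (ad R L x) = 0) ↔
      ∀ i, LinearMap.trace R L (ad R L (b i)) = 0 := by
  refine ⟨fun h i => h (b i), fun h x => ?_⟩
  rw [← b.sum_repr x]
  simp only [map_sum, map_smul, h, smul_zero, Finset.sum_const_zero]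

theorem trace_ad_basis_eq_zero_of_lie_mem_span [DecidableEq ι] (b : Module.Basis ι R L) {i : ι}
    (h : ∀ j, ∃ c : R, ⁅b j, b i⁆ = c • b i) :
    LinearMap.trace R L (ad R L (b i)) = 0 := by
  rw [LinearMap.trace_eq_sum_basis_repr b]
  refine Finset.sum_eq_zero fun j _ => ?_
  obtain ⟨c, hc⟩ := h j
  by_cases hji : j = i
  · simp [hji]
  · rw [ad_apply, ← lie_skew, hc]
    simp [Ne.symm hji]

end LieAlgebra

open LieAlgebra in
/-- The (complexified) Lie algebra with (1,0)-coframe satisfying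
`dω¹ = A ω¹∧ω³ + B ω¹∧ω̄³`, `dω² = C ω²∧ω³ + D ω²∧ω̄³`, `dω³ = 0`
is unimodular (trace of every adjoint map vanishes) iff `A + conj B + C + conj D = 0`.
The basis `b 0,…,b 5` is the dual basis `Z₁,Z₂,Z₃,Z̄₁,Z̄₂,Z̄₃` of the coframe
`ω¹,ω²,ω³,ω̄¹,ω̄²,ω̄³`; the stated structure equations translate into the listed brackets. -/
theorem stmt0 {g : Type*} [LieRing g] [LieAlgebra ℂ g]
    (A B C D : ℂ) (b : Module.Basis (Fin 6) ℂ g)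
    (h20 : ⁅b 2, b 0⁆ = A • b 0)
    (h21 : ⁅b 2, b 1⁆ = C • b 1)
    (h23 : ⁅b 2, b 3⁆ = (starRingEnd ℂ) B • b 3)
    (h24 : ⁅b 2, b 4⁆ = (starRingEnd ℂ) D • b 4)
    (h50 : ⁅b 5, b 0⁆ = B • b 0)
    (h51 : ⁅b 5, b 1⁆ = D • b 1)
    (h53 : ⁅b 5, b 3⁆ = (starRingEnd ℂ) A • b 3)
    (h54 : ⁅b 5, b 4⁆ = (starRingEnd ℂ) C • b 4)
    (h25 : ⁅b 2, b 5⁆ = 0)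
    (hrest : ∀ i j : Fin 6, i ≠ 2 → i ≠ 5 → j ≠ 2 → j ≠ 5 → ⁅b i, b j⁆ = 0) :
    (∀ x : g, LinearMap.trace ℂ g (LieAlgebra.ad ℂ g x) = 0) ↔
      A + (starRingEnd ℂ) B + C + (starRingEnd ℂ) D = 0 := by
  set S := A + (starRingEnd ℂ) B + C + (starRingEnd ℂ) D
  have ad2 : ∀ i, ⁅b 2, b i⁆ = ![A, C, 0, (starRingEnd ℂ) B, (starRingEnd ℂ) D, 0] i • b i := by
    intro i; fin_cases i <;> simp [h20, h21, h23, h24, h25]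
  have h52 : ⁅b 5, b 2⁆ = 0 := by rw [← lie_skew, h25, neg_zero]
  have ad5 : ∀ i, ⁅b 5, b i⁆ = ![B, D, 0, (starRingEnd ℂ) A, (starRingEnd ℂ) C, 0] i • b i := by
    intro i; fin_cases i <;> simp [h50, h51, h52, h53, h54]
  have trace2 : LinearMap.trace ℂ g (ad ℂ g (b 2)) = S := by
    rw [LinearMap.trace_eq_sum_of_apply_basis_eq_smul b ad2, Fin.sum_univ_six]
    simp [S]; ring
  have trace5 : LinearMap.trace ℂ g (ad ℂ g (b 5)) = (starRingEnd ℂ) S := by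
    rw [LinearMap.trace_eq_sum_of_apply_basis_eq_smul b ad5, Fin.sum_univ_six]
    simp [S]; ring
  have trace_other : ∀ i, i ≠ 2 → i ≠ 5 → LinearMap.trace ℂ g (ad ℂ g (b i)) = 0 := by
    intro i hi2 hi5
    refine trace_ad_basis_eq_zero_of_lie_mem_span b fun j => ?_
    by_cases hj2 : j = 2
    · exact hj2 ▸ ⟨_, ad2 i⟩
    by_cases hj5 : j = 5
    · exact hj5 ▸ ⟨_, ad5 i⟩
    exact ⟨0, by rw [hrest j i hj2 hj5 hi2 hi5, zero_smul]⟩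
  rw [forall_trace_ad_eq_zero_iff b]
  refine ⟨fun h => trace2 ▸ h 2, fun hS i => ?_⟩
  by_cases hi2 : i = 2
  · rw [hi2, trace2, hS]
  by_cases hi5 : i = 5
  · rw [hi5, trace5, hS, map_zero]
  exact trace_other i hi2 hi5
end

section
/- Fix 0 ≠ s ∈ ℤ and an integer n ≥ 3, and let τ = −log((n + √(n² − 4(−1)^s))/2). Let D be the 4×4 diagonal matrix diag(e^{−τ}, e^{−τ}, (−1)^s e^{τ}, (−1)^s e^{τ}). Then, with β± = ½(−n ± √(n² − 4(−1)^s)) and Q the matrix with rows (0, β₊, 0, β₋), (0, 1, 0, 1), (β₊, 0, β₋, 0), (1, 0, 1, 0), one has Q·D·Q⁻¹ = B_s, where B_s is the integer matrix with 2×2 blocks [[0, (−1)^{s+1}],[1, n]] on the diagonal. In particular D is conjugate to an integer matrix in GL(4,ℤ). -/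
set_option maxHeartbeats 1000000


/-- With `τ = −log((n + √(n² − 4(−1)^s))/2)` (for `0 ≠ s ∈ ℤ`, `n ≥ 3`),
`D = diag(e^{−τ}, e^{−τ}, (−1)^s e^{τ}, (−1)^s e^{τ})`, `β± = ½(−n ± √(n² − 4(−1)^s))`
and `Q` the matrix with rows `(0,β₊,0,β₋)`, `(0,1,0,1)`, `(β₊,0,β₋,0)`, `(1,0,1,0)`,
one has `Q·D·Q⁻¹ = B_s`, where `B_s` is the integer matrix with diagonal 2×2 blocks
`[[0,(−1)^{s+1}],[1,n]]`; moreover `Q` is invertible, so `D` is conjugate to an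
integer matrix. -/
theorem stmt6 (s : ℤ) (hs : s ≠ 0) (n : ℤ) (hn : 3 ≤ n) (τ βp βm : ℝ)
    (hτ : τ = -Real.log (((n : ℝ) + Real.sqrt ((n : ℝ) ^ 2 - 4 * (-1 : ℝ) ^ s)) / 2))
    (hβp : βp = (-(n : ℝ) + Real.sqrt ((n : ℝ) ^ 2 - 4 * (-1 : ℝ) ^ s)) / 2)
    (hβm : βm = (-(n : ℝ) - Real.sqrt ((n : ℝ) ^ 2 - 4 * (-1 : ℝ) ^ s)) / 2)
    (D Q Bs : Matrix (Fin 4) (Fin 4) ℝ)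
    (hD : D = Matrix.diagonal
      ![Real.exp (-τ), Real.exp (-τ), (-1 : ℝ) ^ s * Real.exp τ, (-1 : ℝ) ^ s * Real.exp τ])
    (hQ : Q = !![0, βp, 0, βm; 0, 1, 0, 1; βp, 0, βm, 0; 1, 0, 1, 0])
    (hB : Bs = !![0, (-1 : ℝ) ^ (s + 1), 0, 0;
                  1, (n : ℝ), 0, 0;
                  0, 0, 0, (-1 : ℝ) ^ (s + 1);
                  0, 0, 1, (n : ℝ)]) :
    Q * D * Q⁻¹ = Bs ∧ IsUnit Q.det := by
  set e : ℝ := (-1 : ℝ) ^ s with he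
  set r : ℝ := Real.sqrt ((n : ℝ) ^ 2 - 4 * e) with hr
  have hee : e * e = 1 := by
    rw [he, ← mul_zpow]
    norm_num
  have he1 : e ≤ 1 := by nlinarith
  have hn3 : (3 : ℝ) ≤ (n : ℝ) := by exact_mod_cast hn
  have hpos : (0 : ℝ) < (n : ℝ) ^ 2 - 4 * e := by nlinarith
  have hr0 : 0 ≤ r := Real.sqrt_nonneg _
  have hr2 : r ^ 2 = (n : ℝ) ^ 2 - 4 * e := Real.sq_sqrt hpos.le
  have hrpos : 0 < r := Real.sqrt_pos.mpr hpos
  clear_value e r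
  have hx : (0 : ℝ) < ((n : ℝ) + r) / 2 := by linarith
  have hexpm : Real.exp (-τ) = -βm := by
    rw [hτ, neg_neg, Real.exp_log hx, hβm]; ring
  have hexpp : e * Real.exp τ = -βp := by
    rw [hτ, Real.exp_neg, Real.exp_log hx, hβp]
    field_simp
    nlinarith
  have hprod : βp * βm = e := by
    rw [hβp, hβm]; nlinarith
  have hs1 : ((-1 : ℝ)) ^ (s + 1) = -e := by
    rw [he, zpow_add₀ (by norm_num : (-1 : ℝ) ≠ 0)]
    ring
  have hrne : r ≠ 0 := ne_of_gt hrpos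
  have hbb : βp - βm = r := by rw [hβp, hβm]; ring
  have hQR : Q * ((r⁻¹ : ℝ) • !![0, 0, 1, -βm; 1, -βm, 0, 0; 0, 0, -1, βp; -1, βp, 0, 0]) = 1 := by
    ext i j
    rw [hQ]
    fin_cases i <;> fin_cases j <;>
      simp [Matrix.mul_apply, Fin.sum_univ_four, Matrix.one_apply] <;>
      field_simp <;>
      nlinarith [hbb, hrpos, hr0, sq_nonneg r]
  have hu : IsUnit Q.det := Matrix.isUnit_det_of_right_inverse hQR
  refine ⟨?_, hu⟩
  have hnb : βp + (n : ℝ) = -βm := by rw [hβp, hβm]; ring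
  have hnb' : βm + (n : ℝ) = -βp := by rw [hβp, hβm]; ring
  have hD' : D = !![-βm, 0, 0, 0; 0, -βm, 0, 0; 0, 0, -βp, 0; 0, 0, 0, -βp] := by
    rw [hD]
    ext i j
    fin_cases i <;> fin_cases j <;>
      simp [Matrix.diagonal, Matrix.vecHead, Matrix.vecTail, hexpm, hexpp]
  have hQD : Q * D = Bs * Q := by
    ext i j
    rw [hQ, hD', hB]
    fin_cases i <;> fin_cases j <;>
      simp [Matrix.mul_apply, Fin.sum_univ_four, Matrix.vecHead, Matrix.vecTail, hs1] <;>
      nlinarith [hprod, hnb, hnb']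
  calc Q * D * Q⁻¹ = Bs * Q * Q⁻¹ := by rw [hQD]
    _ = Bs * (Q * Q⁻¹) := by rw [Matrix.mul_assoc]
    _ = Bs := by rw [Matrix.mul_nonsing_inv Q hu, Matrix.mul_one]
end

section
/- Let g be a 2n-dimensional Lie algebra with (1,0)-coframe {ω¹,…,ω^{n}} satisfying dω^j = A^j ω^{n}∧ω^{j} + B^j ω̄^{n}∧ω^{j} for j = 1,…,n−1 and dω^n = 0, with A^j, B^j ∈ ℂ. If a Hermitian 2-form F = (i/2)Σ_{h} α_{h h̄} ω^{h}∧ω̄^{h} + (off-diagonal terms Σ_{h≠k} α_{h k̄} ω^h∧ω̄^k) with all α_{j j̄} > 0 satisfies ∂∂̄F = 0, then |B^j + conj(A^j)|² = 0 for every j ∈ {1,…,n−1}, and consequently the diagonal form F̃ = (i/2) Σ_{h=1}^{n} ω^{h}∧ω̄^{h} satisfies dF̃ = 0. -/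
/-!
Each coframe element is an eigenvector of `∂` and `∂̄` relative to left multiplication by `ωⁿ`
resp. `ω̄ⁿ`, so the graded Leibniz rule gives, with `Aⁿ = Bⁿ = 0`,
`∂∂̄(ωʰ ∧ ω̄ᵏ) = (Aʰ + conj Bᵏ)(Bʰ + conj Aᵏ) ωⁿ ∧ ω̄ⁿ ∧ ωʰ ∧ ω̄ᵏ`, which vanishes when `h = n` or
`k = n`. By linear independence every coefficient of `∂∂̄F` vanishes, and the diagonal one is
`(i/2) α_{jj̄} |Bʲ + conj Aʲ|²`. Once `Bʲ = -conj Aʲ`, the same Leibniz computation for `d`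
gives `d(ωʰ ∧ ω̄ʰ) = 0`.
-/

open ComplexConjugate

section Anticommuting

variable {Λ : Type*} [Ring Λ] {p q x y : Λ}

theorem mul_mul_mul_left_eq_zero (hqp : q * p = -(p * q)) (hp : p * p = 0) :
    p * (q * (p * y)) = 0 := by
  rw [← mul_assoc q, hqp, neg_mul, mul_neg, ← mul_assoc, ← mul_assoc, hp, zero_mul, zero_mul,
    neg_zero]

theorem mul_mul_mul_right_eq_zero (hxq : x * q = -(q * x)) (hq : q * q = 0) :
    p * (q * (x * q)) = 0 := by
  rw [hxq, mul_neg, ← mul_assoc q, hq, zero_mul, neg_zero, mul_zero]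

end Anticommuting

section OddDerivation

variable {Λ : Type*} [Ring Λ] [Algebra ℂ Λ]

theorem mul_self_eq_zero_of_eq_neg {x : Λ} (h : x * x = -(x * x)) : x * x = 0 := by
  have h2 : (2 : ℂ) • (x * x) = 0 := by rw [two_smul]; exact eq_neg_iff_add_eq_zero.mp h
  simpa using h2

variable (D : Λ →ₗ[ℂ] Λ) {p q x y : Λ}

theorem map_mul_of_map_eq_smul_mul_add {a a' b b' : ℂ} (hD : D (x * y) = D x * y - x * D y)
    (hxp : x * p = -(p * x)) (hxq : x * q = -(q * x))
    (hx : D x = a • (p * x) + a' • (q * x)) (hy : D y = b • (p * y) + b' • (q * y)) :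
    D (x * y) = (a + b) • (p * (x * y)) + (a' + b') • (q * (x * y)) := by
  rw [hD, hx, hy]
  simp only [add_mul, mul_add, smul_mul_assoc, mul_smul_comm, ← mul_assoc, hxp, hxq, neg_mul,
    smul_neg, add_smul]
  abel

theorem map_mul_of_map_eq_smul_mul {a b : ℂ} (hD : D (x * y) = D x * y - x * D y)
    (hxp : x * p = -(p * x)) (hx : D x = a • (p * x)) (hy : D y = b • (p * y)) :
    D (x * y) = (a + b) • (p * (x * y)) := by
  rw [hD, hx, hy, smul_mul_assoc, mul_smul_comm, ← mul_assoc, ← mul_assoc, hxp, neg_mul,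
    smul_neg, sub_neg_eq_add, add_smul, mul_assoc]

theorem map_map_mul_of_map_eq_smul_mul (dp db : Λ →ₗ[ℂ] Λ) {α β γ δ : ℂ}
    (hpx : dp (x * y) = dp x * y - x * dp y) (hbx : db (x * y) = db x * y - x * db y)
    (hpq : dp (q * (x * y)) = dp q * (x * y) - q * dp (x * y))
    (hxp : x * p = -(p * x)) (hxq : x * q = -(q * x)) (hqp : q * p = -(p * q))
    (hdpx : dp x = α • (p * x)) (hdbx : db x = β • (q * x))
    (hdpy : dp y = γ • (p * y)) (hdby : db y = δ • (q * y)) (hdpq : dp q = 0) :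
    dp (db (x * y)) = ((α + γ) * (β + δ)) • (p * (q * (x * y))) := by
  have hdpq' : dp q = (0 : ℂ) • (p * q) := by rw [hdpq, zero_smul]
  rw [map_mul_of_map_eq_smul_mul db hbx hxq hdbx hdby, map_smul,
    map_mul_of_map_eq_smul_mul dp hpq hqp hdpq' (map_mul_of_map_eq_smul_mul dp hpx hxp hdpx hdpy),
    zero_add, smul_smul, mul_comm]

end OddDerivation

theorem add_conj_mul_add_conj (a b : ℂ) : (a + conj b) * (b + conj a) = (‖b + conj a‖ : ℂ) ^ 2 := by
  rw [← Complex.conj_mul', map_add, Complex.conj_conj, add_comm (conj b)]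

section Coframe

variable {Λ : Type*} [Ring Λ] [Algebra ℂ Λ] {m : ℕ} {ω ωb : Fin (m + 1) → Λ} {S : Set Λ}

theorem dp_db_ω_mul_ωb (dp db : Λ →ₗ[ℂ] Λ) (a b : Fin (m + 1) → ℂ)
    (hanti : ∀ x ∈ S, ∀ y ∈ S, x * y = -(y * x)) (hωS : ∀ h, ω h ∈ S) (hωbS : ∀ h, ωb h ∈ S)
    (hpLeib : ∀ x ∈ S, ∀ y : Λ, dp (x * y) = dp x * y - x * dp y)
    (hbLeib : ∀ x ∈ S, ∀ y : Λ, db (x * y) = db x * y - x * db y)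
    (hpω : ∀ h, dp (ω h) = a h • (ω (Fin.last m) * ω h))
    (hbω : ∀ h, db (ω h) = b h • (ωb (Fin.last m) * ω h))
    (hpωb : ∀ h, dp (ωb h) = conj (b h) • (ω (Fin.last m) * ωb h))
    (hbωb : ∀ h, db (ωb h) = conj (a h) • (ωb (Fin.last m) * ωb h))
    (hpbn : dp (ωb (Fin.last m)) = 0) (h k : Fin (m + 1)) :
    dp (db (ω h * ωb k)) = ((a h + conj (b k)) * (b h + conj (a k))) •
      (ω (Fin.last m) * (ωb (Fin.last m) * (ω h * ωb k))) :=
  map_map_mul_of_map_eq_smul_mul dp db (hpLeib _ (hωS h) _) (hbLeib _ (hωS h) _)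
    (hpLeib _ (hωbS _) _) (hanti _ (hωS h) _ (hωS _)) (hanti _ (hωS h) _ (hωbS _))
    (hanti _ (hωbS _) _ (hωS _)) (hpω h) (hbω h) (hpωb k) (hbωb k) hpbn

theorem dp_db_sum_eq (dp db : Λ →ₗ[ℂ] Λ) (A B : Fin m → ℂ)
    (hanti : ∀ x ∈ S, ∀ y ∈ S, x * y = -(y * x)) (hωS : ∀ h, ω h ∈ S) (hωbS : ∀ h, ωb h ∈ S)
    (hpLeib : ∀ x ∈ S, ∀ y : Λ, dp (x * y) = dp x * y - x * dp y)
    (hbLeib : ∀ x ∈ S, ∀ y : Λ, db (x * y) = db x * y - x * db y)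
    (hpω : ∀ j : Fin m, dp (ω j.castSucc) = A j • (ω (Fin.last m) * ω j.castSucc))
    (hbω : ∀ j : Fin m, db (ω j.castSucc) = B j • (ωb (Fin.last m) * ω j.castSucc))
    (hpωb : ∀ j : Fin m, dp (ωb j.castSucc) = conj (B j) • (ω (Fin.last m) * ωb j.castSucc))
    (hbωb : ∀ j : Fin m, db (ωb j.castSucc) = conj (A j) • (ωb (Fin.last m) * ωb j.castSucc))
    (hpn : dp (ω (Fin.last m)) = 0) (hbn : db (ω (Fin.last m)) = 0)
    (hpbn : dp (ωb (Fin.last m)) = 0) (hbbn : db (ωb (Fin.last m)) = 0)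
    (c : Fin (m + 1) → Fin (m + 1) → ℂ) :
    dp (db (∑ h, ∑ k, c h k • (ω h * ωb k))) =
      ∑ jk : Fin m × Fin m, (c jk.1.castSucc jk.2.castSucc *
        ((A jk.1 + conj (B jk.2)) * (B jk.1 + conj (A jk.2)))) •
        (ω (Fin.last m) * ωb (Fin.last m) * ω jk.1.castSucc * ωb jk.2.castSucc) := by
  set a : Fin (m + 1) → ℂ := Fin.snoc A 0
  set b : Fin (m + 1) → ℂ := Fin.snoc B 0
  have hpω' : ∀ h, dp (ω h) = a h • (ω (Fin.last m) * ω h) := by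
    refine Fin.forall_fin_succ'.2 ⟨fun j => ?_, ?_⟩ <;> simp [a, hpω, hpn]
  have hbω' : ∀ h, db (ω h) = b h • (ωb (Fin.last m) * ω h) := by
    refine Fin.forall_fin_succ'.2 ⟨fun j => ?_, ?_⟩ <;> simp [b, hbω, hbn]
  have hpωb' : ∀ h, dp (ωb h) = conj (b h) • (ω (Fin.last m) * ωb h) := by
    refine Fin.forall_fin_succ'.2 ⟨fun j => ?_, ?_⟩ <;> simp [b, hpωb, hpbn]
  have hbωb' : ∀ h, db (ωb h) = conj (a h) • (ωb (Fin.last m) * ωb h) := by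
    refine Fin.forall_fin_succ'.2 ⟨fun j => ?_, ?_⟩ <;> simp [a, hbωb, hbbn]
  have hleft : ∀ k, ω (Fin.last m) * (ωb (Fin.last m) * (ω (Fin.last m) * ωb k)) = 0 := fun k =>
    mul_mul_mul_left_eq_zero (hanti _ (hωbS _) _ (hωS _))
      (mul_self_eq_zero_of_eq_neg (hanti _ (hωS _) _ (hωS _)))
  have hright : ∀ h, ω (Fin.last m) * (ωb (Fin.last m) * (ω h * ωb (Fin.last m))) = 0 := fun h =>
    mul_mul_mul_right_eq_zero (hanti _ (hωS h) _ (hωbS _))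
      (mul_self_eq_zero_of_eq_neg (hanti _ (hωbS _) _ (hωbS _)))
  simp only [map_sum, map_smul,
    dp_db_ω_mul_ωb dp db _ _ hanti hωS hωbS hpLeib hbLeib hpω' hbω' hpωb' hbωb' hpbn]
  simp only [Fin.sum_univ_castSucc, hleft, hright, smul_zero, Finset.sum_const_zero, add_zero,
    a, b, Fin.snoc_castSucc, Fintype.sum_prod_type, smul_smul, mul_assoc]

theorem d_ω_mul_ωb_self_eq_zero (d : Λ →ₗ[ℂ] Λ) (A B : Fin m → ℂ)
    (hanti : ∀ x ∈ S, ∀ y ∈ S, x * y = -(y * x)) (hωS : ∀ h, ω h ∈ S) (hωbS : ∀ h, ωb h ∈ S)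
    (hdLeib : ∀ x ∈ S, ∀ y : Λ, d (x * y) = d x * y - x * d y)
    (hdω : ∀ j : Fin m, d (ω j.castSucc) =
      A j • (ω (Fin.last m) * ω j.castSucc) + B j • (ωb (Fin.last m) * ω j.castSucc))
    (hdωb : ∀ j : Fin m, d (ωb j.castSucc) =
      conj (A j) • (ωb (Fin.last m) * ωb j.castSucc) +
        conj (B j) • (ω (Fin.last m) * ωb j.castSucc))
    (hdn : d (ω (Fin.last m)) = 0) (hdbn : d (ωb (Fin.last m)) = 0)
    (hBA : ∀ j, B j + conj (A j) = 0) : ∀ h, d (ω h * ωb h) = 0 := by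
  refine Fin.forall_fin_succ'.2 ⟨fun j => ?_, ?_⟩
  · have hAB : A j + conj (B j) = 0 := by simpa [add_comm] using congrArg conj (hBA j)
    rw [map_mul_of_map_eq_smul_mul_add d (hdLeib _ (hωS _) _) (hanti _ (hωS _) _ (hωS _))
      (hanti _ (hωS _) _ (hωbS _)) (hdω j) (by rw [hdωb j, add_comm]), hAB, hBA j, zero_smul,
      zero_smul, add_zero]
  · rw [hdLeib _ (hωS _) _, hdn, hdbn, zero_mul, mul_zero, sub_zero]

end Coframe

/-- For a `2n`-dimensional Lie algebra (`n = m + 1`) with (1,0)-coframe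
`ω¹,…,ωⁿ` satisfying `dωʲ = Aʲ ωⁿ∧ωʲ + Bʲ ω̄ⁿ∧ωʲ` for `j ≤ n−1` and `dωⁿ = 0`:
if a Hermitian 2-form `F = (i/2)Σ α_{hh̄} ω^h∧ω̄^h + Σ_{h≠k} α_{hk̄} ω^h∧ω̄^k`
with all diagonal coefficients `α_{hh̄} > 0` satisfies `∂∂̄F = 0`, then
`|Bʲ + conj Aʲ|² = 0` for every `j ≤ n−1`, and the diagonal form
`F̃ = (i/2) Σ_h ω^h∧ω̄^h` satisfies `dF̃ = 0`. -/
theorem stmt7 {Λ : Type*} [Ring Λ] [Algebra ℂ Λ] (m : ℕ)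
    (d dp db : Λ →ₗ[ℂ] Λ)
    (ω ωb : Fin (m + 1) → Λ) (A B : Fin m → ℂ)
    (S : Set Λ) (hS : S = Set.range ω ∪ Set.range ωb)
    (hanti : ∀ x ∈ S, ∀ y ∈ S, x * y = -(y * x))
    (hdLeib : ∀ x ∈ Submodule.span ℂ S, ∀ y : Λ, d (x * y) = d x * y - x * d y)
    (hpLeib : ∀ x ∈ Submodule.span ℂ S, ∀ y : Λ, dp (x * y) = dp x * y - x * dp y)
    (hbLeib : ∀ x ∈ Submodule.span ℂ S, ∀ y : Λ, db (x * y) = db x * y - x * db y)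
    (hdω : ∀ j : Fin m, d (ω j.castSucc) =
      A j • (ω (Fin.last m) * ω j.castSucc) + B j • (ωb (Fin.last m) * ω j.castSucc))
    (hdωb : ∀ j : Fin m, d (ωb j.castSucc) =
      (starRingEnd ℂ) (A j) • (ωb (Fin.last m) * ωb j.castSucc)
        + (starRingEnd ℂ) (B j) • (ω (Fin.last m) * ωb j.castSucc))
    (hdn : d (ω (Fin.last m)) = 0) (hdbn : d (ωb (Fin.last m)) = 0)
    (hpω : ∀ j : Fin m, dp (ω j.castSucc) = A j • (ω (Fin.last m) * ω j.castSucc))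
    (hbω : ∀ j : Fin m, db (ω j.castSucc) = B j • (ωb (Fin.last m) * ω j.castSucc))
    (hpωb : ∀ j : Fin m, dp (ωb j.castSucc) =
      (starRingEnd ℂ) (B j) • (ω (Fin.last m) * ωb j.castSucc))
    (hbωb : ∀ j : Fin m, db (ωb j.castSucc) =
      (starRingEnd ℂ) (A j) • (ωb (Fin.last m) * ωb j.castSucc))
    (hpn : dp (ω (Fin.last m)) = 0) (hbn : db (ω (Fin.last m)) = 0)
    (hpbn : dp (ωb (Fin.last m)) = 0) (hbbn : db (ωb (Fin.last m)) = 0)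
    (αd : Fin (m + 1) → ℝ) (hαd : ∀ h, 0 < αd h)
    (αo : Fin (m + 1) → Fin (m + 1) → ℂ) (hαo : ∀ h, αo h h = 0)
    (F : Λ)
    (hF : F = (∑ h, ((Complex.I / 2) * (αd h : ℂ)) • (ω h * ωb h))
      + ∑ h, ∑ k, αo h k • (ω h * ωb k))
    (hindep : LinearIndependent ℂ (fun p : Fin m × Fin m =>
      ω (Fin.last m) * ωb (Fin.last m) * ω p.1.castSucc * ωb p.2.castSucc))
    (hSKT : dp (db F) = 0) :
    (∀ j : Fin m, ‖B j + (starRingEnd ℂ) (A j)‖ ^ 2 = 0) ∧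
      d ((Complex.I / 2) • ∑ h, ω h * ωb h) = 0 := by
  subst hS
  have hωS : ∀ h, ω h ∈ Set.range ω ∪ Set.range ωb := fun h => Or.inl ⟨h, rfl⟩
  have hωbS : ∀ h, ωb h ∈ Set.range ω ∪ Set.range ωb := fun h => Or.inr ⟨h, rfl⟩
  let c : Fin (m + 1) → Fin (m + 1) → ℂ := fun h k =>
    (if h = k then Complex.I / 2 * (αd h : ℂ) else 0) + αo h k
  have hFc : F = ∑ h, ∑ k, c h k • (ω h * ωb k) := by
    simp only [hF, c, add_smul, ite_smul, zero_smul, Finset.sum_add_distrib, Finset.sum_ite_eq,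
      Finset.mem_univ, if_true]
  have hcoeff := Fintype.linearIndependent_iff.mp hindep _ <| by
    rw [← dp_db_sum_eq dp db A B hanti hωS hωbS (fun x hx => hpLeib x (Submodule.subset_span hx))
      (fun x hx => hbLeib x (Submodule.subset_span hx)) hpω hbω hpωb hbωb hpn hbn hpbn hbbn c,
      ← hFc, hSKT]
  have hnorm : ∀ j : Fin m, ‖B j + conj (A j)‖ ^ 2 = 0 := by
    intro j
    have hcj : c j.castSucc j.castSucc ≠ 0 := by simp [c, hαo, (hαd _).ne']
    have hj := hcoeff (j, j)
    rw [add_conj_mul_add_conj] at hj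
    exact_mod_cast (mul_eq_zero.mp hj).resolve_left hcj
  refine ⟨hnorm, ?_⟩
  have hBA : ∀ j, B j + conj (A j) = 0 := fun j => by simpa using hnorm j
  have hdiag := d_ω_mul_ωb_self_eq_zero d A B hanti hωS hωbS
    (fun x hx => hdLeib x (Submodule.subset_span hx)) hdω hdωb hdn hdbn hBA
  rw [map_smul, map_sum, Finset.sum_eq_zero fun h _ => hdiag h, smul_zero]
end

section
/- With the same Lie algebra and Hermitian form F as above (structure equations dω¹ = A ω¹∧ω³ + B ω¹∧ω̄³, dω² = −(A+conj(B)+ε) ω²∧ω³ + ε ω²∧ω̄³, dω³=0 and B = −conj(A)), one has 2∂̄F = (conj(A)+ε)(u ω¹∧ω̄²∧ω̄³ + conj(u) ω²∧ω̄¹∧ω̄³) − ε conj(v) ω³∧ω̄²∧ω̄³ + conj(A) conj(z) ω³∧ω̄¹∧ω̄³. Consequently dF = 0 if and only if u(A+ε)=0, εv=0 and Az=0. -/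
private lemma swap_assoc' {Λ : Type*} [Ring Λ] {x y : Λ} (h : x * y = -(y * x)) (z : Λ) :
    x * (y * z) = -(y * (x * z)) := by
  rw [← mul_assoc, h, neg_mul, mul_assoc]

private lemma sq_assoc' {Λ : Type*} [Ring Λ] {x : Λ} (h : x * x = 0) (z : Λ) :
    x * (x * z) = 0 := by
  rw [← mul_assoc, h, zero_mul]

/-- With the structure equations of Statement 8 and `B = −conj A`,
one has
`2∂̄F = (conj A + ε)(u ω¹∧ω̄²∧ω̄³ + ū ω²∧ω̄¹∧ω̄³) − ε v̄ ω³∧ω̄²∧ω̄³ + conj A z̄ ω³∧ω̄¹∧ω̄³`,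
and consequently `dF = 0` iff `u(A+ε) = 0`, `εv = 0` and `Az = 0`. -/
theorem stmt9 {Λ : Type*} [Ring Λ] [Algebra ℂ Λ]
    (d dp db : Λ →ₗ[ℂ] Λ) (ω1 ω2 ω3 ωb1 ωb2 ωb3 : Λ) (A B ε : ℂ)
    (hε : ε = 0 ∨ ε = 1) (hB : B = -(starRingEnd ℂ) A)
    (hanti : ∀ x ∈ ({ω1, ω2, ω3, ωb1, ωb2, ωb3} : Set Λ),
      ∀ y ∈ ({ω1, ω2, ω3, ωb1, ωb2, ωb3} : Set Λ), x * y = -(y * x))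
    (hdLeib : ∀ x ∈ Submodule.span ℂ ({ω1, ω2, ω3, ωb1, ωb2, ωb3} : Set Λ),
      ∀ y : Λ, d (x * y) = d x * y - x * d y)
    (hbLeib : ∀ x ∈ Submodule.span ℂ ({ω1, ω2, ω3, ωb1, ωb2, ωb3} : Set Λ),
      ∀ y : Λ, db (x * y) = db x * y - x * db y)
    (hdpb : ∀ x : Λ, d x = dp x + db x)
    (hd1 : d ω1 = A • (ω1 * ω3) + B • (ω1 * ωb3))
    (hd2 : d ω2 = -(A + (starRingEnd ℂ) B + ε) • (ω2 * ω3) + ε • (ω2 * ωb3))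
    (hd3 : d ω3 = 0)
    (hdb1 : d ωb1 = (starRingEnd ℂ) A • (ωb1 * ωb3) + (starRingEnd ℂ) B • (ωb1 * ω3))
    (hdb2 : d ωb2 = -((starRingEnd ℂ) A + B + ε) • (ωb2 * ωb3) + ε • (ωb2 * ω3))
    (hdb3 : d ωb3 = 0)
    (hb1 : db ω1 = B • (ω1 * ωb3)) (hb2 : db ω2 = ε • (ω2 * ωb3)) (hb3 : db ω3 = 0)
    (hbb1 : db ωb1 = (starRingEnd ℂ) A • (ωb1 * ωb3))
    (hbb2 : db ωb2 = -((starRingEnd ℂ) A + B + ε) • (ωb2 * ωb3))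
    (hbb3 : db ωb3 = 0)
    (t : ℝ) (ht : t ≠ 0) (u v z : ℂ) (F : Λ)
    (hF : (2 : ℂ) • F = Complex.I • (ω1 * ωb1) + Complex.I • (ω2 * ωb2)
      + (Complex.I * (t : ℂ) ^ 2) • (ω3 * ωb3)
      + u • (ω1 * ωb2) - (starRingEnd ℂ) u • (ω2 * ωb1)
      + v • (ω2 * ωb3) - (starRingEnd ℂ) v • (ω3 * ωb2)
      + z • (ω1 * ωb3) - (starRingEnd ℂ) z • (ω3 * ωb1))
    (hindep : LinearIndependent ℂ
      ![ω1 * ωb2 * ωb3, ω2 * ωb1 * ωb3, ω3 * ωb2 * ωb3, ω3 * ωb1 * ωb3,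
        ω2 * ω3 * ωb1, ω1 * ω3 * ωb2, ω2 * ω3 * ωb3, ω1 * ω3 * ωb3]) :
    (2 : ℂ) • db F = ((starRingEnd ℂ) A + ε) •
        (u • (ω1 * ωb2 * ωb3) + (starRingEnd ℂ) u • (ω2 * ωb1 * ωb3))
      - (ε * (starRingEnd ℂ) v) • (ω3 * ωb2 * ωb3)
      + ((starRingEnd ℂ) A * (starRingEnd ℂ) z) • (ω3 * ωb1 * ωb3) ∧
    (d F = 0 ↔ u * (A + ε) = 0 ∧ ε * v = 0 ∧ A * z = 0) := by
  subst hB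
  have m1 : ω1 ∈ ({ω1, ω2, ω3, ωb1, ωb2, ωb3} : Set Λ) := by simp
  have m2 : ω2 ∈ ({ω1, ω2, ω3, ωb1, ωb2, ωb3} : Set Λ) := by simp
  have m3 : ω3 ∈ ({ω1, ω2, ω3, ωb1, ωb2, ωb3} : Set Λ) := by simp
  have m4 : ωb1 ∈ ({ω1, ω2, ω3, ωb1, ωb2, ωb3} : Set Λ) := by simp
  have m5 : ωb2 ∈ ({ω1, ω2, ω3, ωb1, ωb2, ωb3} : Set Λ) := by simp
  have m6 : ωb3 ∈ ({ω1, ω2, ω3, ωb1, ωb2, ωb3} : Set Λ) := by simp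
  have s1 := Submodule.subset_span (R := ℂ) m1
  have s2 := Submodule.subset_span (R := ℂ) m2
  have s3 := Submodule.subset_span (R := ℂ) m3
  -- squares vanish
  have sq : ∀ x ∈ ({ω1, ω2, ω3, ωb1, ωb2, ωb3} : Set Λ), x * x = 0 := by
    intro x hx
    have h := hanti x hx x hx
    have h2 : (2 : ℂ) • (x * x) = 0 := by
      rw [two_smul]
      nth_rewrite 2 [h]
      exact add_neg_cancel _
    calc x * x = (2⁻¹ : ℂ) • ((2 : ℂ) • (x * x)) := by rw [smul_smul]; norm_num
    _ = 0 := by rw [h2, smul_zero]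
  have q1 : ω1 * ω1 = 0 := sq _ m1
  have q2 : ω2 * ω2 = 0 := sq _ m2
  have q3 : ω3 * ω3 = 0 := sq _ m3
  have q4 : ωb1 * ωb1 = 0 := sq _ m4
  have q5 : ωb2 * ωb2 = 0 := sq _ m5
  have q6 : ωb3 * ωb3 = 0 := sq _ m6
  have q1' := sq_assoc' q1
  have q2' := sq_assoc' q2
  have q3' := sq_assoc' q3
  have q4' := sq_assoc' q4
  have q5' := sq_assoc' q5
  have q6' := sq_assoc' q6
  -- swaps (out-of-order pairs in the order ω1 ω2 ω3 ωb1 ωb2 ωb3)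
  have p21 := hanti ω2 m2 ω1 m1
  have p31 := hanti ω3 m3 ω1 m1
  have p32 := hanti ω3 m3 ω2 m2
  have p41 := hanti ωb1 m4 ω1 m1
  have p42 := hanti ωb1 m4 ω2 m2
  have p43 := hanti ωb1 m4 ω3 m3
  have p51 := hanti ωb2 m5 ω1 m1
  have p52 := hanti ωb2 m5 ω2 m2
  have p53 := hanti ωb2 m5 ω3 m3
  have p54 := hanti ωb2 m5 ωb1 m4
  have p61 := hanti ωb3 m6 ω1 m1
  have p62 := hanti ωb3 m6 ω2 m2
  have p63 := hanti ωb3 m6 ω3 m3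
  have p64 := hanti ωb3 m6 ωb1 m4
  have p65 := hanti ωb3 m6 ωb2 m5
  have p21' := swap_assoc' p21
  have p31' := swap_assoc' p31
  have p32' := swap_assoc' p32
  have p41' := swap_assoc' p41
  have p42' := swap_assoc' p42
  have p43' := swap_assoc' p43
  have p51' := swap_assoc' p51
  have p52' := swap_assoc' p52
  have p53' := swap_assoc' p53
  have p54' := swap_assoc' p54
  have p61' := swap_assoc' p61
  have p62' := swap_assoc' p62
  have p63' := swap_assoc' p63
  have p64' := swap_assoc' p64
  have p65' := swap_assoc' p65
  have hce : (starRingEnd ℂ) ε = ε := by rcases hε with h | h <;> simp [h]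
  -- Part 1 : the ∂̄ computation
  have part1 : (2 : ℂ) • db F = ((starRingEnd ℂ) A + ε) •
        (u • (ω1 * ωb2 * ωb3) + (starRingEnd ℂ) u • (ω2 * ωb1 * ωb3))
      - (ε * (starRingEnd ℂ) v) • (ω3 * ωb2 * ωb3)
      + ((starRingEnd ℂ) A * (starRingEnd ℂ) z) • (ω3 * ωb1 * ωb3) := by
    rw [← map_smul, hF]
    simp only [map_add, map_sub, map_smul]
    simp only [hbLeib ω1 s1, hbLeib ω2 s2, hbLeib ω3 s3]
    simp only [hb1, hb2, hb3, hbb1, hbb2, hbb3]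
    simp only [map_neg, Complex.conj_conj, mul_add, add_mul, mul_sub, sub_mul, smul_mul_assoc, mul_smul_comm,
      smul_smul, mul_assoc, p21, p31, p32, p41, p42, p43, p51, p52, p53, p54,
      p61, p62, p63, p64, p65, p21', p31', p32', p41', p42', p43', p51', p52',
      p53', p54', p61', p62', p63', p64', p65', q1, q2, q3, q4, q5, q6,
      q1', q2', q3', q4', q5', q6', mul_zero, zero_mul, mul_neg, neg_mul,
      smul_zero, zero_smul, smul_neg, neg_neg, add_zero, zero_add, sub_zero, zero_sub]
    module
  refine ⟨part1, ?_⟩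
  -- key computation for d
  have key : (2 : ℂ) • d F =
      (u * ((starRingEnd ℂ) A + ε)) • (ω1 * ωb2 * ωb3)
    + ((starRingEnd ℂ) u * ((starRingEnd ℂ) A + ε)) • (ω2 * ωb1 * ωb3)
    + (-(ε * (starRingEnd ℂ) v)) • (ω3 * ωb2 * ωb3)
    + ((starRingEnd ℂ) A * (starRingEnd ℂ) z) • (ω3 * ωb1 * ωb3)
    + ((starRingEnd ℂ) u * (A + ε)) • (ω2 * ω3 * ωb1)
    + (u * (A + ε)) • (ω1 * ω3 * ωb2)
    + (-(ε * v)) • (ω2 * ω3 * ωb3)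
    + (A * z) • (ω1 * ω3 * ωb3) := by
    rw [← map_smul, hF]
    simp only [map_add, map_sub, map_smul]
    simp only [hdLeib ω1 s1, hdLeib ω2 s2, hdLeib ω3 s3]
    simp only [hd1, hd2, hd3, hdb1, hdb2, hdb3]
    simp only [map_neg, Complex.conj_conj]
    simp only [mul_add, add_mul, mul_sub, sub_mul, smul_mul_assoc, mul_smul_comm,
      smul_smul, mul_assoc, p21, p31, p32, p41, p42, p43, p51, p52, p53, p54,
      p61, p62, p63, p64, p65, p21', p31', p32', p41', p42', p43', p51', p52',
      p53', p54', p61', p62', p63', p64', p65', q1, q2, q3, q4, q5, q6,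
      q1', q2', q3', q4', q5', q6', mul_zero, zero_mul, mul_neg, neg_mul,
      smul_zero, zero_smul, smul_neg, neg_neg, add_zero, zero_add, sub_zero, zero_sub]
    module
  have h2iff : d F = 0 ↔ (2 : ℂ) • d F = 0 := by
    constructor
    · intro h; rw [h, smul_zero]
    · intro h
      calc d F = (2⁻¹ : ℂ) • ((2 : ℂ) • d F) := by rw [smul_smul]; norm_num
      _ = 0 := by rw [h, smul_zero]
  rw [h2iff, key]
  constructor
  · intro h0
    have hsum : ∑ i : Fin 8,
        (![u * ((starRingEnd ℂ) A + ε), (starRingEnd ℂ) u * ((starRingEnd ℂ) A + ε),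
           -(ε * (starRingEnd ℂ) v), (starRingEnd ℂ) A * (starRingEnd ℂ) z,
           (starRingEnd ℂ) u * (A + ε), u * (A + ε), -(ε * v), A * z]) i •
        (![ω1 * ωb2 * ωb3, ω2 * ωb1 * ωb3, ω3 * ωb2 * ωb3, ω3 * ωb1 * ωb3,
           ω2 * ω3 * ωb1, ω1 * ω3 * ωb2, ω2 * ω3 * ωb3, ω1 * ω3 * ωb3]) i = 0 := by
      rw [Fin.sum_univ_eight]; exact h0
    have hz := Fintype.linearIndependent_iff.mp hindep _ hsum
    exact ⟨hz 5, neg_eq_zero.mp (hz 6), hz 7⟩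
  · rintro ⟨h1, h2, h3⟩
    have h1' : (starRingEnd ℂ) u * ((starRingEnd ℂ) A + ε) = 0 := by
      have := congrArg (starRingEnd ℂ) h1
      simpa [map_mul, map_add, hce] using this
    have h2' : ε * (starRingEnd ℂ) v = 0 := by
      have := congrArg (starRingEnd ℂ) h2
      simpa [map_mul, hce] using this
    have h3' : (starRingEnd ℂ) A * (starRingEnd ℂ) z = 0 := by
      have := congrArg (starRingEnd ℂ) h3
      simpa [map_mul] using this
    rcases mul_eq_zero.mp h1 with hu | hAe
    · have hub : (starRingEnd ℂ) u = 0 := by simp [hu]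
      simp [hu, hub, h2, h2', h3, h3']
    · have hAe' : (starRingEnd ℂ) A + ε = 0 := by
        have := congrArg (starRingEnd ℂ) hAe
        simpa [map_add, hce] using this
      simp [hAe, hAe', h2, h2', h3, h3']
end

section
/- Let g be a Lie algebra with (1,0)-coframe {ω¹,ω²,ω³} satisfying dω¹ = −ω¹∧ω̄³, dω² = −t̄ ω¹∧ω² + ω²∧ω̄³, dω³ = −t ω³∧ω̄¹ for a complex parameter t. Then d² = 0 for every t ∈ ℂ, and d(ω¹∧ω²∧ω³) = −t ω¹∧ω²∧ω³∧ω̄¹. In particular ω¹∧ω²∧ω³ is closed if and only if t = 0. -/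
/-- For the deformed Nakamura structure equations
`dω¹ = −ω¹∧ω̄³`, `dω² = −t̄ ω¹∧ω² + ω²∧ω̄³`, `dω³ = −t ω³∧ω̄¹` (together with their
conjugates), one has `d² = 0` on all generators for every `t ∈ ℂ`, and
`d(ω¹∧ω²∧ω³) = −t ω¹∧ω²∧ω³∧ω̄¹`; in particular `ω¹∧ω²∧ω³` is closed iff `t = 0`. -/
theorem stmt11 {Λ : Type*} [Ring Λ] [Algebra ℂ Λ]
    (d : Λ →ₗ[ℂ] Λ) (ω1 ω2 ω3 ωb1 ωb2 ωb3 : Λ) (t : ℂ)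
    (hanti : ∀ x ∈ ({ω1, ω2, ω3, ωb1, ωb2, ωb3} : Set Λ),
      ∀ y ∈ ({ω1, ω2, ω3, ωb1, ωb2, ωb3} : Set Λ), x * y = -(y * x))
    (hLeib : ∀ x ∈ Submodule.span ℂ ({ω1, ω2, ω3, ωb1, ωb2, ωb3} : Set Λ),
      ∀ y : Λ, d (x * y) = d x * y - x * d y)
    (hd1 : d ω1 = -(ω1 * ωb3))
    (hd2 : d ω2 = -(starRingEnd ℂ) t • (ω1 * ω2) + ω2 * ωb3)
    (hd3 : d ω3 = -t • (ω3 * ωb1))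
    (hdb1 : d ωb1 = -(ωb1 * ω3))
    (hdb2 : d ωb2 = -t • (ωb1 * ωb2) + ωb2 * ω3)
    (hdb3 : d ωb3 = -(starRingEnd ℂ) t • (ωb3 * ω1))
    (hne : ω1 * ω2 * ω3 * ωb1 ≠ 0) :
    (d (d ω1) = 0 ∧ d (d ω2) = 0 ∧ d (d ω3) = 0 ∧
      d (d ωb1) = 0 ∧ d (d ωb2) = 0 ∧ d (d ωb3) = 0) ∧
    d (ω1 * ω2 * ω3) = -t • (ω1 * ω2 * ω3 * ωb1) ∧
    (d (ω1 * ω2 * ω3) = 0 ↔ t = 0) := by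
  have mem : ∀ x ∈ ({ω1, ω2, ω3, ωb1, ωb2, ωb3} : Set Λ), x ∈ ({ω1, ω2, ω3, ωb1, ωb2, ωb3} : Set Λ) := fun x hx => hx
  have mem1 : ω1 ∈ ({ω1, ω2, ω3, ωb1, ωb2, ωb3} : Set Λ) := by simp
  have mem2 : ω2 ∈ ({ω1, ω2, ω3, ωb1, ωb2, ωb3} : Set Λ) := by simp
  have mem3 : ω3 ∈ ({ω1, ω2, ω3, ωb1, ωb2, ωb3} : Set Λ) := by simp
  have mem4 : ωb1 ∈ ({ω1, ω2, ω3, ωb1, ωb2, ωb3} : Set Λ) := by simp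
  have mem5 : ωb2 ∈ ({ω1, ω2, ω3, ωb1, ωb2, ωb3} : Set Λ) := by simp
  have mem6 : ωb3 ∈ ({ω1, ω2, ω3, ωb1, ωb2, ωb3} : Set Λ) := by simp
  have sq : ∀ x ∈ ({ω1, ω2, ω3, ωb1, ωb2, ωb3} : Set Λ), x * x = 0 := by
    intro x hx
    have h := hanti x hx x hx
    have h2 : (2:ℂ) • (x*x) = 0 := by
      rw [two_smul]
      nth_rewrite 1 [h]
      exact neg_add_cancel _
    simpa using (smul_eq_zero.mp h2).resolve_left (by norm_num)
  have sw : ∀ x ∈ ({ω1, ω2, ω3, ωb1, ωb2, ωb3} : Set Λ), ∀ y ∈ ({ω1, ω2, ω3, ωb1, ωb2, ωb3} : Set Λ), ∀ z : Λ, x*(y*z) = -(y*(x*z)) := by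
    intro x hx y hy z
    rw [← mul_assoc, hanti x hx y hy, neg_mul, mul_assoc]
  have sq1 : ω1 * ω1 = 0 := sq ω1 mem1
  have sq1' : ∀ z : Λ, ω1 * (ω1 * z) = 0 := fun z => by rw [← mul_assoc, sq1, zero_mul]
  have sq2 : ω2 * ω2 = 0 := sq ω2 mem2
  have sq2' : ∀ z : Λ, ω2 * (ω2 * z) = 0 := fun z => by rw [← mul_assoc, sq2, zero_mul]
  have sq3 : ω3 * ω3 = 0 := sq ω3 mem3
  have sq3' : ∀ z : Λ, ω3 * (ω3 * z) = 0 := fun z => by rw [← mul_assoc, sq3, zero_mul]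
  have sq4 : ωb1 * ωb1 = 0 := sq ωb1 mem4
  have sq4' : ∀ z : Λ, ωb1 * (ωb1 * z) = 0 := fun z => by rw [← mul_assoc, sq4, zero_mul]
  have sq5 : ωb2 * ωb2 = 0 := sq ωb2 mem5
  have sq5' : ∀ z : Λ, ωb2 * (ωb2 * z) = 0 := fun z => by rw [← mul_assoc, sq5, zero_mul]
  have sq6 : ωb3 * ωb3 = 0 := sq ωb3 mem6
  have sq6' : ∀ z : Λ, ωb3 * (ωb3 * z) = 0 := fun z => by rw [← mul_assoc, sq6, zero_mul]
  have sw21 : ω2 * ω1 = -(ω1 * ω2) := hanti ω2 mem2 ω1 mem1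
  have sw21' : ∀ z : Λ, ω2 * (ω1 * z) = -(ω1 * (ω2 * z)) := sw ω2 mem2 ω1 mem1
  have sw31 : ω3 * ω1 = -(ω1 * ω3) := hanti ω3 mem3 ω1 mem1
  have sw31' : ∀ z : Λ, ω3 * (ω1 * z) = -(ω1 * (ω3 * z)) := sw ω3 mem3 ω1 mem1
  have sw32 : ω3 * ω2 = -(ω2 * ω3) := hanti ω3 mem3 ω2 mem2
  have sw32' : ∀ z : Λ, ω3 * (ω2 * z) = -(ω2 * (ω3 * z)) := sw ω3 mem3 ω2 mem2
  have sw41 : ωb1 * ω1 = -(ω1 * ωb1) := hanti ωb1 mem4 ω1 mem1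
  have sw41' : ∀ z : Λ, ωb1 * (ω1 * z) = -(ω1 * (ωb1 * z)) := sw ωb1 mem4 ω1 mem1
  have sw42 : ωb1 * ω2 = -(ω2 * ωb1) := hanti ωb1 mem4 ω2 mem2
  have sw42' : ∀ z : Λ, ωb1 * (ω2 * z) = -(ω2 * (ωb1 * z)) := sw ωb1 mem4 ω2 mem2
  have sw43 : ωb1 * ω3 = -(ω3 * ωb1) := hanti ωb1 mem4 ω3 mem3
  have sw43' : ∀ z : Λ, ωb1 * (ω3 * z) = -(ω3 * (ωb1 * z)) := sw ωb1 mem4 ω3 mem3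
  have sw51 : ωb2 * ω1 = -(ω1 * ωb2) := hanti ωb2 mem5 ω1 mem1
  have sw51' : ∀ z : Λ, ωb2 * (ω1 * z) = -(ω1 * (ωb2 * z)) := sw ωb2 mem5 ω1 mem1
  have sw52 : ωb2 * ω2 = -(ω2 * ωb2) := hanti ωb2 mem5 ω2 mem2
  have sw52' : ∀ z : Λ, ωb2 * (ω2 * z) = -(ω2 * (ωb2 * z)) := sw ωb2 mem5 ω2 mem2
  have sw53 : ωb2 * ω3 = -(ω3 * ωb2) := hanti ωb2 mem5 ω3 mem3
  have sw53' : ∀ z : Λ, ωb2 * (ω3 * z) = -(ω3 * (ωb2 * z)) := sw ωb2 mem5 ω3 mem3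
  have sw54 : ωb2 * ωb1 = -(ωb1 * ωb2) := hanti ωb2 mem5 ωb1 mem4
  have sw54' : ∀ z : Λ, ωb2 * (ωb1 * z) = -(ωb1 * (ωb2 * z)) := sw ωb2 mem5 ωb1 mem4
  have sw61 : ωb3 * ω1 = -(ω1 * ωb3) := hanti ωb3 mem6 ω1 mem1
  have sw61' : ∀ z : Λ, ωb3 * (ω1 * z) = -(ω1 * (ωb3 * z)) := sw ωb3 mem6 ω1 mem1
  have sw62 : ωb3 * ω2 = -(ω2 * ωb3) := hanti ωb3 mem6 ω2 mem2
  have sw62' : ∀ z : Λ, ωb3 * (ω2 * z) = -(ω2 * (ωb3 * z)) := sw ωb3 mem6 ω2 mem2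
  have sw63 : ωb3 * ω3 = -(ω3 * ωb3) := hanti ωb3 mem6 ω3 mem3
  have sw63' : ∀ z : Λ, ωb3 * (ω3 * z) = -(ω3 * (ωb3 * z)) := sw ωb3 mem6 ω3 mem3
  have sw64 : ωb3 * ωb1 = -(ωb1 * ωb3) := hanti ωb3 mem6 ωb1 mem4
  have sw64' : ∀ z : Λ, ωb3 * (ωb1 * z) = -(ωb1 * (ωb3 * z)) := sw ωb3 mem6 ωb1 mem4
  have sw65 : ωb3 * ωb2 = -(ωb2 * ωb3) := hanti ωb3 mem6 ωb2 mem5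
  have sw65' : ∀ z : Λ, ωb3 * (ωb2 * z) = -(ωb2 * (ωb3 * z)) := sw ωb3 mem6 ωb2 mem5
  have L1 := hLeib ω1 (Submodule.subset_span mem1)
  have L2 := hLeib ω2 (Submodule.subset_span mem2)
  have L3 := hLeib ω3 (Submodule.subset_span mem3)
  have L4 := hLeib ωb1 (Submodule.subset_span mem4)
  have L5 := hLeib ωb2 (Submodule.subset_span mem5)
  have L6 := hLeib ωb3 (Submodule.subset_span mem6)
  have key : d (ω1 * ω2 * ω3) = -t • (ω1 * ω2 * ω3 * ωb1) := by
    simp only [mul_assoc, add_mul, mul_add, sub_mul, mul_sub, smul_add, smul_sub, neg_mul, mul_neg, neg_neg, smul_neg, neg_smul, mul_smul_comm, smul_mul_assoc, smul_zero, mul_zero, zero_mul, neg_zero, sub_self, sub_zero, zero_sub, add_zero, zero_add, map_add, map_neg, map_smul, map_sub, L1, L2, L3, L4, L5, L6, hd1, hd2, hd3, hdb1, hdb2, hdb3, sq1, sq1', sq2, sq2', sq3, sq3', sq4, sq4', sq5, sq5', sq6, sq6', sw21, sw21', sw31, sw31', sw32, sw32', sw41, sw41', sw42, sw42', sw43, sw43',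 sw51, sw51', sw52, sw52', sw53, sw53', sw54, sw54', sw61, sw61', sw62, sw62', sw63, sw63', sw64, sw64', sw65, sw65']
    module
  refine ⟨⟨?_, ?_, ?_, ?_, ?_, ?_⟩, key, ?_⟩
  · simp only [mul_assoc, add_mul, mul_add, sub_mul, mul_sub, smul_add, smul_sub, neg_mul, mul_neg, neg_neg, smul_neg, neg_smul, mul_smul_comm, smul_mul_assoc, smul_zero, mul_zero, zero_mul, neg_zero, sub_self, sub_zero, zero_sub, add_zero, zero_add, map_add, map_neg, map_smul, map_sub, L1, L2, L3, L4, L5, L6, hd1, hd2, hd3, hdb1, hdb2, hdb3, sq1, sq1', sq2, sq2', sq3, sq3', sq4, sq4', sq5, sq5', sq6, sq6', sw21, sw21', sw31, sw31', sw32, sw32', sw41, sw41', sw42, sw42', sw43, sw43', sw51, sw51', sw52, sw52', sw53, sw53', sw54, sw54', sw61, sw61', sw62, sw62', sw63, sw63', sw64, sw64', sw65, sw65']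
  · simp only [mul_assoc, add_mul, mul_add, sub_mul, mul_sub, smul_add, smul_sub, neg_mul, mul_neg, neg_neg, smul_neg, neg_smul, mul_smul_comm, smul_mul_assoc, smul_zero, mul_zero, zero_mul, neg_zero, sub_self, sub_zero, zero_sub, add_zero, zero_add, map_add, map_neg, map_smul, map_sub, L1, L2, L3, L4, L5, L6, hd1, hd2, hd3, hdb1, hdb2, hdb3, sq1, sq1', sq2, sq2', sq3, sq3', sq4, sq4', sq5, sq5', sq6, sq6', sw21, sw21', sw31, sw31', sw32, sw32', sw41, sw41', sw42, sw42', sw43, sw43', sw51, sw51', sw52, sw52', sw53, sw53', sw54, sw54', sw61, sw61', sw62, sw62', sw63, sw63', sw64, sw64', sw65, sw65']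
  · simp only [mul_assoc, add_mul, mul_add, sub_mul, mul_sub, smul_add, smul_sub, neg_mul, mul_neg, neg_neg, smul_neg, neg_smul, mul_smul_comm, smul_mul_assoc, smul_zero, mul_zero, zero_mul, neg_zero, sub_self, sub_zero, zero_sub, add_zero, zero_add, map_add, map_neg, map_smul, map_sub, L1, L2, L3, L4, L5, L6, hd1, hd2, hd3, hdb1, hdb2, hdb3, sq1, sq1', sq2, sq2', sq3, sq3', sq4, sq4', sq5, sq5', sq6, sq6', sw21, sw21', sw31, sw31', sw32, sw32', sw41, sw41', sw42, sw42', sw43, sw43', sw51, sw51', sw52, sw52', sw53, sw53', sw54, sw54', sw61, sw61', sw62, sw62', sw63, sw63', sw64, sw64', sw65, sw65']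
  · simp only [mul_assoc, add_mul, mul_add, sub_mul, mul_sub, smul_add, smul_sub, neg_mul, mul_neg, neg_neg, smul_neg, neg_smul, mul_smul_comm, smul_mul_assoc, smul_zero, mul_zero, zero_mul, neg_zero, sub_self, sub_zero, zero_sub, add_zero, zero_add, map_add, map_neg, map_smul, map_sub, L1, L2, L3, L4, L5, L6, hd1, hd2, hd3, hdb1, hdb2, hdb3, sq1, sq1', sq2, sq2', sq3, sq3', sq4, sq4', sq5, sq5', sq6, sq6', sw21, sw21', sw31, sw31', sw32, sw32', sw41, sw41', sw42, sw42', sw43, sw43', sw51, sw51', sw52, sw52', sw53, sw53', sw54, sw54', sw61, sw61', sw62, sw62', sw63, sw63', sw64, sw64', sw65, sw65']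
  · simp only [mul_assoc, add_mul, mul_add, sub_mul, mul_sub, smul_add, smul_sub, neg_mul, mul_neg, neg_neg, smul_neg, neg_smul, mul_smul_comm, smul_mul_assoc, smul_zero, mul_zero, zero_mul, neg_zero, sub_self, sub_zero, zero_sub, add_zero, zero_add, map_add, map_neg, map_smul, map_sub, L1, L2, L3, L4, L5, L6, hd1, hd2, hd3, hdb1, hdb2, hdb3, sq1, sq1', sq2, sq2', sq3, sq3', sq4, sq4', sq5, sq5', sq6, sq6', sw21, sw21', sw31, sw31', sw32, sw32', sw41, sw41', sw42, sw42', sw43, sw43', sw51, sw51', sw52, sw52', sw53, sw53', sw54, sw54', sw61, sw61', sw62, sw62', sw63, sw63', sw64, sw64', sw65, sw65']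
  · simp only [mul_assoc, add_mul, mul_add, sub_mul, mul_sub, smul_add, smul_sub, neg_mul, mul_neg, neg_neg, smul_neg, neg_smul, mul_smul_comm, smul_mul_assoc, smul_zero, mul_zero, zero_mul, neg_zero, sub_self, sub_zero, zero_sub, add_zero, zero_add, map_add, map_neg, map_smul, map_sub, L1, L2, L3, L4, L5, L6, hd1, hd2, hd3, hdb1, hdb2, hdb3, sq1, sq1', sq2, sq2', sq3, sq3', sq4, sq4', sq5, sq5', sq6, sq6', sw21, sw21', sw31, sw31', sw32, sw32', sw41, sw41', sw42, sw42', sw43, sw43', sw51, sw51', sw52, sw52', sw53, sw53', sw54, sw54', sw61, sw61', sw62, sw62', sw63, sw63', sw64, sw64', sw65, sw65']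
  · rw [key]
    constructor
    · intro h
      rcases smul_eq_zero.mp h with h' | h'
      · simpa [neg_eq_zero] using h'
      · exact absurd h' hne
    · intro h; simp [h]
end

section
/- Let g be the Lie algebra with coframe {ω¹,ω²,ω³} satisfying dω¹ = −ω¹∧ω̄³, dω² = −t̄ ω¹∧ω² + ω²∧ω̄³, dω³ = −t ω³∧ω̄¹ with t ≠ 0. Then the space {θ ∈ span_ℂ(ω¹,ω²,ω³) : ∂̄θ = 0} is zero. -/
/-- For the deformed Nakamura structure equations with `t ≠ 0`
(`∂̄ω¹ = −ω¹∧ω̄³`, `∂̄ω² = ω²∧ω̄³`, `∂̄ω³ = −t ω³∧ω̄¹`), there is no nonzero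
holomorphic invariant (1,0)-form: the space `{θ ∈ span_ℂ(ω¹,ω²,ω³) : ∂̄θ = 0}` is zero. -/
theorem stmt12 {Λ : Type*} [Ring Λ] [Algebra ℂ Λ]
    (db : Λ →ₗ[ℂ] Λ) (ω1 ω2 ω3 ωb1 ωb3 : Λ) (t : ℂ) (ht : t ≠ 0)
    (hb1 : db ω1 = -(ω1 * ωb3))
    (hb2 : db ω2 = ω2 * ωb3)
    (hb3 : db ω3 = -t • (ω3 * ωb1))
    (hindep : LinearIndependent ℂ ![ω1 * ωb3, ω2 * ωb3, ω3 * ωb1]) :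
    ∀ θ ∈ Submodule.span ℂ ({ω1, ω2, ω3} : Set Λ), db θ = 0 → θ = 0 := by
  intro θ hθ hdθ
  rw [Submodule.mem_span_insert] at hθ
  obtain ⟨a, z, hz, rfl⟩ := hθ
  rw [Submodule.mem_span_insert] at hz
  obtain ⟨b, w, hw, rfl⟩ := hz
  rw [Submodule.mem_span_singleton] at hw
  obtain ⟨c, rfl⟩ := hw
  rw [Fintype.linearIndependent_iff] at hindep
  have key : ∀ i, ![(-a : ℂ), b, -(c*t)] i = 0 := by
    apply hindep
    have : db (a • ω1 + (b • ω2 + c • ω3)) =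
        (-a) • (ω1 * ωb3) + b • (ω2 * ωb3) + (-(c*t)) • (ω3 * ωb1) := by
      simp [hb1, hb2, hb3, smul_smul]
      ring_nf
      module
    rw [hdθ] at this
    simpa [Fin.sum_univ_three, neg_smul] using this.symm
  have ha : a = 0 := by have := key 0; simpa using this
  have hb : b = 0 := by have := key 1; simpa using this
  have hc : c = 0 := by
    have := key 2
    simp at this
    rcases this with h | h
    · exact h
    · exact absurd h ht
  simp [ha, hb, hc]
end

section
/- Given C ∈ ℂ with Im C ≠ 0, the characters α₁(z) = exp(−(C−i)z − (C+i)z̄) and α₂ = α₁⁻¹ on ℂ satisfy: for z = π(1 − i·Re C)/(2 Im C), α₁(z) + α₂(z) = −2, and for z = (i/2)log((3+√5)/2), α₁(z) + α₂(z) = 3. Consequently, at both points the diagonal matrix diag(α₁(z), α₂(z)) has integer trace and determinant 1, hence integer characteristic polynomial. -/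
/-!
The exponent `-(C - i) z - (C + i) z̄` of `α₁` is `ℝ`-linear in `z`. Along the real line spanned by
`1 - i Re C` it equals `-2i t Im C`, so `z₁` is chosen to give `-πi` and `α₁(z₁) = α₂(z₁) = -1`.
Along the imaginary axis, at `z = (i/2) s`, it equals `-s`, so `α₁(z₂) = x⁻¹` and `α₂(z₂) = x` with
`x = (3 + √5)/2`, a root of `x² - 3x + 1`. In both cases `α₂ = α₁⁻¹` forces determinant `1`.
-/

open Complex

lemma exponent_ofReal_mul_one_sub_I_mul_re (C : ℂ) (t : ℝ) :
    -(C - I) * ((t : ℂ) * (1 - I * C.re)) - (C + I) * starRingEnd ℂ ((t : ℂ) * (1 - I * C.re)) =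
      -((2 * t * C.im : ℝ) * I) := by
  apply Complex.ext <;> simp <;> ring

lemma exponent_I_div_two_mul_ofReal (C : ℂ) (s : ℝ) :
    -(C - I) * (I / 2 * s) - (C + I) * starRingEnd ℂ (I / 2 * s) = -s := by
  simp only [map_mul, map_div₀, conj_I, conj_ofReal, map_ofNat]
  linear_combination (s : ℂ) * I_sq

lemma three_add_sqrt_five_div_two_add_inv : (3 + √5) / 2 + ((3 + √5) / 2)⁻¹ = (3 : ℝ) := by
  have h5 : √5 * √5 = 5 := Real.mul_self_sqrt (by norm_num)
  have hpos : 0 < 3 + √5 := by positivity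
  field_simp
  nlinarith

lemma det_diagonal_inv_eq_one {K : Type*} [Field K] {x : K} (hx : x ≠ 0) :
    Matrix.det (Matrix.diagonal ![x, x⁻¹]) = 1 := by
  simp [Matrix.det_diagonal, Fin.prod_univ_two, hx]

/-- For `C ∈ ℂ` with `Im C ≠ 0`, the characters
`α₁(z) = exp(−(C−i)z − (C+i)z̄)`, `α₂ = α₁⁻¹` satisfy
`α₁(z₁) + α₂(z₁) = −2` at `z₁ = π(1 − i Re C)/(2 Im C)` and
`α₁(z₂) + α₂(z₂) = 3` at `z₂ = (i/2)log((3+√5)/2)`.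
Consequently at both points `diag(α₁(z), α₂(z))` has integer trace and determinant 1. -/
theorem stmt13 (C : ℂ) (hC : C.im ≠ 0)
    (α1 α2 : ℂ → ℂ)
    (hα1 : ∀ z : ℂ, α1 z =
      Complex.exp (-(C - Complex.I) * z - (C + Complex.I) * (starRingEnd ℂ) z))
    (hα2 : ∀ z : ℂ, α2 z = (α1 z)⁻¹)
    (z1 z2 : ℂ)
    (hz1 : z1 = ((Real.pi / (2 * C.im) : ℝ) : ℂ) * (1 - Complex.I * (C.re : ℂ)))
    (hz2 : z2 = (Complex.I / 2) * ((Real.log ((3 + Real.sqrt 5) / 2) : ℝ) : ℂ)) :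
    α1 z1 + α2 z1 = -2 ∧ α1 z2 + α2 z2 = 3 ∧
      Matrix.trace (Matrix.diagonal ![α1 z1, α2 z1]) = -2 ∧
      Matrix.det (Matrix.diagonal ![α1 z1, α2 z1]) = 1 ∧
      Matrix.trace (Matrix.diagonal ![α1 z2, α2 z2]) = 3 ∧
      Matrix.det (Matrix.diagonal ![α1 z2, α2 z2]) = 1 := by
  have h1 : α1 z1 = -1 := by
    have hπ : 2 * (Real.pi / (2 * C.im)) * C.im = Real.pi := by field_simp
    rw [hα1, hz1, exponent_ofReal_mul_one_sub_I_mul_re, hπ, exp_neg_pi_mul_I]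
  have h2 : α1 z2 = (((3 + √5) / 2 : ℝ) : ℂ)⁻¹ := by
    rw [hα1, hz2, exponent_I_div_two_mul_ofReal, ← ofReal_neg, ← ofReal_exp, Real.exp_neg,
      Real.exp_log (by positivity), ofReal_inv]
  have sum1 : α1 z1 + α2 z1 = -2 := by rw [hα2, h1]; norm_num
  have sum2 : α1 z2 + α2 z2 = 3 := by
    rw [hα2, h2, inv_inv, add_comm]
    exact_mod_cast three_add_sqrt_five_div_two_add_inv
  have det1 := det_diagonal_inv_eq_one (x := α1 z1) (by rw [h1]; norm_num)
  have det2 := det_diagonal_inv_eq_one (x := α1 z2) (by rw [hα1]; exact exp_ne_zero _)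
  rw [← hα2] at det1 det2
  refine ⟨sum1, sum2, ?_, det1, ?_, det2⟩ <;>
    simpa [Matrix.trace_diagonal, Fin.sum_univ_two]
end

section
/- Let J and J' be the Lie algebra complex structures on ℝ⁶ defined respectively by the data (A, B=−1, ε=1) and (A', B'=−1, ε=1) in the structure equations dω¹ = A ω¹∧ω³ − ω¹∧ω̄³, dω² = −A ω²∧ω³ + ω²∧ω̄³, dω³ = 0. If there is a Lie algebra automorphism F with J = F⁻¹∘J'∘F, then A = A'. -/
/-!
`F` maps `b 0` and `b 2` into the (1,0)-space `span (b' 0, b' 1, b' 2)`, say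
`F (b 0) = s b'₀ + t b'₁ + w b'₂` and `F (b 2) = p b'₀ + q b'₁ + r b'₂`; since `F` commutes with
the conjugation, `F (b 5) = F (σ (b 2))` is the conjugate combination of `b' 3, b' 4, b' 5`.
The vector `b 0` is a common eigenvector of `ad (b 2)` and `ad (b 5)`. Comparing coordinates in
`F ⁅b 0, b 5⁆ = F (b 0)` gives `w = 0`, `r̄ s = s` and `r̄ t = -t`; comparing them in
`F ⁅b 0, b 2⁆ = -A F (b 0)` gives `A' r s = A s` and `A' r t = -A t`. As `(s, t) ≠ 0`, either
`r = 1` and `A = A'`, or `r = -1` and again `A = A'`.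
-/

section Brackets

variable {g : Type*} [LieRing g] [LieAlgebra ℂ g] (b : Module.Basis (Fin 6) ℂ g)

theorem lie_combination_012_012 {A : ℂ} (h02 : ⁅b 0, b 2⁆ = -A • b 0)
    (h12 : ⁅b 1, b 2⁆ = A • b 1) (h01 : ⁅b 0, b 1⁆ = 0) (s t w p q r : ℂ) :
    ⁅s • b 0 + t • b 1 + w • b 2, p • b 0 + q • b 1 + r • b 2⁆
      = A • ((w * p - s * r) • b 0 + (t * r - w * q) • b 1) := by
  have h10 : ⁅b 1, b 0⁆ = 0 := by rw [← lie_skew, h01, neg_zero]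
  have h20 : ⁅b 2, b 0⁆ = A • b 0 := by rw [← lie_skew, h02, neg_smul, neg_neg]
  have h21 : ⁅b 2, b 1⁆ = -A • b 1 := by rw [← lie_skew, h12, neg_smul]
  simp only [lie_add, add_lie, lie_smul, smul_lie, lie_self, h01, h10, h02, h12, h20, h21]
  module

theorem lie_combination_012_345 (h05 : ⁅b 0, b 5⁆ = b 0) (h15 : ⁅b 1, b 5⁆ = -b 1)
    (h25 : ⁅b 2, b 5⁆ = 0) (h32 : ⁅b 3, b 2⁆ = b 3) (h42 : ⁅b 4, b 2⁆ = -b 4)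
    (h03 : ⁅b 0, b 3⁆ = 0) (h04 : ⁅b 0, b 4⁆ = 0) (h13 : ⁅b 1, b 3⁆ = 0)
    (h14 : ⁅b 1, b 4⁆ = 0) (s t w p q r : ℂ) :
    ⁅s • b 0 + t • b 1 + w • b 2, p • b 3 + q • b 4 + r • b 5⁆
      = r • (s • b 0 - t • b 1) + w • (q • b 4 - p • b 3) := by
  have h23 : ⁅b 2, b 3⁆ = -b 3 := by rw [← lie_skew, h32]
  have h24 : ⁅b 2, b 4⁆ = b 4 := by rw [← lie_skew, h42, neg_neg]
  simp only [lie_add, add_lie, lie_smul, smul_lie, h03, h04, h05, h13, h14, h15, h23, h24, h25]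
  module

end Brackets

theorem eq_of_coefficient_relations {s t r A A' : ℂ} (hst : s ≠ 0 ∨ t ≠ 0)
    (hs : (starRingEnd ℂ) r * s = s) (ht : -((starRingEnd ℂ) r * t) = t)
    (hsA : A' * (s * r) = A * s) (htA : A' * (t * r) = -(A * t)) : A = A' := by
  rcases hst with hs0 | ht0
  · have hr : (starRingEnd ℂ) r = 1 := mul_right_cancel₀ hs0 (by linear_combination hs)
    rw [← Complex.conj_conj r, hr, map_one] at hsA
    exact mul_right_cancel₀ hs0 (by linear_combination -hsA)
  · have hr : (starRingEnd ℂ) r = -1 := mul_right_cancel₀ ht0 (by linear_combination -ht)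
    rw [← Complex.conj_conj r, hr, map_neg, map_one] at htA
    exact mul_right_cancel₀ ht0 (by linear_combination htA)

theorem stmt14_general {g : Type*} [LieRing g] [LieAlgebra ℂ g]
    (A A' : ℂ)
    (σ : g → g)
    (hσadd : ∀ x y : g, σ (x + y) = σ x + σ y)
    (hσsmul : ∀ (c : ℂ) (x : g), σ (c • x) = (starRingEnd ℂ) c • σ x)
    (b b' : Module.Basis (Fin 6) ℂ g)
    (hσb : σ (b 0) = b 3 ∧ σ (b 1) = b 4 ∧ σ (b 2) = b 5)
    (hσb' : σ (b' 0) = b' 3 ∧ σ (b' 1) = b' 4 ∧ σ (b' 2) = b' 5)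
    -- brackets encoding the structure equations with parameter A
    (hb02 : ⁅b 0, b 2⁆ = -A • b 0) (hb05 : ⁅b 0, b 5⁆ = b 0)
    -- brackets encoding the structure equations with parameter A'
    (hb02' : ⁅b' 0, b' 2⁆ = -A' • b' 0) (hb05' : ⁅b' 0, b' 5⁆ = b' 0)
    (hb12' : ⁅b' 1, b' 2⁆ = A' • b' 1) (hb15' : ⁅b' 1, b' 5⁆ = -b' 1)
    (hb32' : ⁅b' 3, b' 2⁆ = b' 3)
    (hb42' : ⁅b' 4, b' 2⁆ = -b' 4)
    (hb25' : ⁅b' 2, b' 5⁆ = 0)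
    (hbrest' : ∀ i j : Fin 6, i ≠ 2 → i ≠ 5 → j ≠ 2 → j ≠ 5 → ⁅b' i, b' j⁆ = 0)
    -- the automorphism realizing the equivalence of the complex structures
    (F : g ≃ₗ[ℂ] g)
    (hFbr : ∀ x y : g, F ⁅x, y⁆ = ⁅F x, F y⁆)
    (hFσ : ∀ x : g, F (σ x) = σ (F x))
    (hF10 : Submodule.map (F : g →ₗ[ℂ] g) (Submodule.span ℂ ({b 0, b 1, b 2} : Set g))
      = Submodule.span ℂ ({b' 0, b' 1, b' 2} : Set g)) :
    A = A' := by
  have hF_mem : ∀ i ∈ ({0, 1, 2} : Set (Fin 6)),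
      F (b i) ∈ Submodule.span ℂ ({b' 0, b' 1, b' 2} : Set g) := fun i hi ↦
    hF10 ▸ Submodule.mem_map_of_mem (Submodule.subset_span (by aesop))
  obtain ⟨s, t, w, hFb0⟩ := Submodule.mem_span_triple.mp (hF_mem 0 (by simp))
  obtain ⟨p, q, r, hFb2⟩ := Submodule.mem_span_triple.mp (hF_mem 2 (by simp))
  have hFb5 : (starRingEnd ℂ) p • b' 3 + (starRingEnd ℂ) q • b' 4 + (starRingEnd ℂ) r • b' 5
      = F (b 5) := by
    rw [← hσb.2.2, hFσ, ← hFb2, hσadd, hσadd, hσsmul, hσsmul, hσsmul, hσb'.1, hσb'.2.1,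
      hσb'.2.2]
  have hbr05 := lie_combination_012_345 b' hb05' hb15' hb25' hb32' hb42'
    (by apply hbrest' <;> decide) (by apply hbrest' <;> decide)
    (by apply hbrest' <;> decide) (by apply hbrest' <;> decide)
    s t w ((starRingEnd ℂ) p) ((starRingEnd ℂ) q) ((starRingEnd ℂ) r)
  rw [hFb0, hFb5, ← hFbr, hb05, ← hFb0] at hbr05
  have hbr02 := lie_combination_012_012 b' hb02' hb12' (by apply hbrest' <;> decide) s t w p q r
  rw [hFb0, hFb2, ← hFbr, hb02, map_smul, ← hFb0] at hbr02
  have hw : w = 0 := by simpa using congr(b'.repr $hbr05 2)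
  subst hw
  have hst : s ≠ 0 ∨ t ≠ 0 := by
    by_contra! h
    apply b.ne_zero 0
    apply F.injective
    rw [← hFb0, h.1, h.2, zero_smul, zero_smul, zero_smul, add_zero, add_zero, map_zero]
  have hs : (starRingEnd ℂ) r * s = s := by simpa using congr(b'.repr $hbr05 0).symm
  have ht : -((starRingEnd ℂ) r * t) = t := by simpa using congr(b'.repr $hbr05 1).symm
  have hsA : A' * (s * r) = A * s := by simpa using congr(b'.repr $hbr02 0).symm
  have htA : A' * (t * r) = -(A * t) := by simpa using congr(b'.repr $hbr02 1).symm
  exact eq_of_coefficient_relations hst hs ht hsA htA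

/-- On the (complexified) Nakamura Lie algebra, consider two complex
structures of splitting type given by the data `(A, B = −1, ε = 1)` and
`(A', B' = −1, ε = 1)`, i.e. with bases `Z₁,Z₂,Z₃,Z̄₁,Z̄₂,Z̄₃` (resp. primed) dual to
coframes satisfying `dω¹ = A ω¹∧ω³ − ω¹∧ω̄³`, `dω² = −A ω²∧ω³ + ω²∧ω̄³`, `dω³ = 0`.
If a Lie algebra automorphism `F` (ℂ-linear extension of a real automorphism, i.e.
commuting with the conjugation `σ`) carries the (1,0)-space `span(Z₁,Z₂,Z₃)` of `J`
onto the (1,0)-space `span(Z₁',Z₂',Z₃')` of `J'` (that is, `J = F⁻¹∘J'∘F`),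
then `A = A'`. Here `|A| ≠ 1`, `|A'| ≠ 1`. -/
theorem stmt14 {g : Type*} [LieRing g] [LieAlgebra ℂ g]
    (A A' : ℂ) (hA : ‖A‖ ≠ 1) (hA' : ‖A'‖ ≠ 1)
    (σ : g → g)
    (hσadd : ∀ x y : g, σ (x + y) = σ x + σ y)
    (hσsmul : ∀ (c : ℂ) (x : g), σ (c • x) = (starRingEnd ℂ) c • σ x)
    (hσinv : ∀ x : g, σ (σ x) = x)
    (hσbr : ∀ x y : g, σ ⁅x, y⁆ = ⁅σ x, σ y⁆)
    (b b' : Module.Basis (Fin 6) ℂ g)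
    (hσb : σ (b 0) = b 3 ∧ σ (b 1) = b 4 ∧ σ (b 2) = b 5)
    (hσb' : σ (b' 0) = b' 3 ∧ σ (b' 1) = b' 4 ∧ σ (b' 2) = b' 5)
    -- brackets encoding the structure equations with parameter A
    (hb02 : ⁅b 0, b 2⁆ = -A • b 0) (hb05 : ⁅b 0, b 5⁆ = b 0)
    (hb12 : ⁅b 1, b 2⁆ = A • b 1) (hb15 : ⁅b 1, b 5⁆ = -b 1)
    (hb35 : ⁅b 3, b 5⁆ = -(starRingEnd ℂ) A • b 3) (hb32 : ⁅b 3, b 2⁆ = b 3)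
    (hb45 : ⁅b 4, b 5⁆ = (starRingEnd ℂ) A • b 4) (hb42 : ⁅b 4, b 2⁆ = -b 4)
    (hb25 : ⁅b 2, b 5⁆ = 0)
    (hbrest : ∀ i j : Fin 6, i ≠ 2 → i ≠ 5 → j ≠ 2 → j ≠ 5 → ⁅b i, b j⁆ = 0)
    -- brackets encoding the structure equations with parameter A'
    (hb02' : ⁅b' 0, b' 2⁆ = -A' • b' 0) (hb05' : ⁅b' 0, b' 5⁆ = b' 0)
    (hb12' : ⁅b' 1, b' 2⁆ = A' • b' 1) (hb15' : ⁅b' 1, b' 5⁆ = -b' 1)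
    (hb35' : ⁅b' 3, b' 5⁆ = -(starRingEnd ℂ) A' • b' 3) (hb32' : ⁅b' 3, b' 2⁆ = b' 3)
    (hb45' : ⁅b' 4, b' 5⁆ = (starRingEnd ℂ) A' • b' 4) (hb42' : ⁅b' 4, b' 2⁆ = -b' 4)
    (hb25' : ⁅b' 2, b' 5⁆ = 0)
    (hbrest' : ∀ i j : Fin 6, i ≠ 2 → i ≠ 5 → j ≠ 2 → j ≠ 5 → ⁅b' i, b' j⁆ = 0)
    -- the automorphism realizing the equivalence of the complex structures
    (F : g ≃ₗ[ℂ] g)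
    (hFbr : ∀ x y : g, F ⁅x, y⁆ = ⁅F x, F y⁆)
    (hFσ : ∀ x : g, F (σ x) = σ (F x))
    (hF10 : Submodule.map (F : g →ₗ[ℂ] g) (Submodule.span ℂ ({b 0, b 1, b 2} : Set g))
      = Submodule.span ℂ ({b' 0, b' 1, b' 2} : Set g)) :
    A = A' :=
  stmt14_general A A' σ hσadd hσsmul b b' hσb hσb' hb02 hb05 hb02' hb05' hb12' hb15' hb32' hb42'
    hb25' hbrest' F hFbr hFσ hF10
end

section
/- For the Lie algebra s₇^α = (e²⁵, −e¹⁵, α e⁴⁵, −α e³⁵, 0, 0) with α ≠ 0, the linear map determined dually by f¹ = e³, f² = −e⁴, f³ = e¹, f⁴ = −e², f⁵ = −α e⁵, f⁶ = e⁶ is a Lie algebra isomorphism from s₇^α onto s₇^{1/α}. -/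
/-!
Both algebras are spanned by an abelian hyperplane `span {e i | i ≠ 4}` and the vector `e 4`,
which acts on it by rotations of speeds `1` and `α` (resp. `1` and `α⁻¹`) in two coordinate
planes. Swapping the two planes and rescaling `e 4` by `-α` matches these actions, so only the
brackets with `e 4` need checking. The map sends a basis to unit multiples of a permuted basis,
hence is bijective.
-/

namespace Module.Basis

variable {ι R M M' : Type*} [CommRing R] [AddCommGroup M] [Module R M] [AddCommGroup M']
  [Module R M']

theorem bijective_constr_smul_comp (b : Basis ι R M) (c : Basis ι R M') {u : ι → R}
    (hu : ∀ i, IsUnit (u i)) {σ : ι → ι} (hσ : σ.Bijective) :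
    Function.Bijective (b.constr R fun i => u i • c (σ i)) := by
  let c' := (c.reindex (Equiv.ofBijective σ hσ).symm).isUnitSMul hu
  have : b.constr R (fun i => u i • c (σ i)) = b.equiv c' (Equiv.refl ι) :=
    b.ext fun i => by simp [c', isUnitSMul_apply]
  exact this ▸ (b.equiv c' (Equiv.refl ι)).bijective

end Module.Basis

section

variable {ι R L L' : Type*} [CommRing R] [LieRing L] [LieAlgebra R L] [LieRing L'] [LieAlgebra R L']

theorem LinearMap.map_lie_of_basis (f : L →ₗ[R] L') (b : Module.Basis ι R L)
    (h : ∀ i j, f ⁅b i, b j⁆ = ⁅f (b i), f (b j)⁆) (x y : L) : f ⁅x, y⁆ = ⁅f x, f y⁆ := by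
  have : (LieModule.toEnd R L L : L →ₗ[R] L →ₗ[R] L).compr₂ f =
      (LieModule.toEnd R L' L' : L' →ₗ[R] L' →ₗ[R] L').compl₁₂ f f :=
    b.ext fun i => b.ext fun j => by simpa using h i j
  simpa using LinearMap.congr_fun₂ this x y

theorem LinearMap.map_lie_of_basis_of_lie_eq_zero (f : L →ₗ[R] L') (b : Module.Basis ι R L)
    (k : ι)
    (hb : ∀ i j, i ≠ k → j ≠ k → ⁅b i, b j⁆ = 0)
    (hf : ∀ i j, i ≠ k → j ≠ k → ⁅f (b i), f (b j)⁆ = 0)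
    (hk : ∀ i, i ≠ k → f ⁅b i, b k⁆ = ⁅f (b i), f (b k)⁆) (x y : L) :
    f ⁅x, y⁆ = ⁅f x, f y⁆ := by
  refine f.map_lie_of_basis b (fun i j => ?_) x y
  by_cases hi : i = k <;> by_cases hj : j = k
  · subst hi hj; simp
  · subst hi; rw [← lie_skew, map_neg, hk j hj, lie_skew]
  · subst hj; exact hk i hi
  · rw [hb i j hi hj, hf i j hi hj, map_zero]

end

/-- For `s₇^α = (e²⁵, −e¹⁵, αe⁴⁵, −αe³⁵, 0, 0)` with `α ≠ 0`, the linear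
map determined dually by `f¹ = e³, f² = −e⁴, f³ = e¹, f⁴ = −e², f⁵ = −α e⁵, f⁶ = e⁶`
is a Lie algebra isomorphism `s₇^α ≅ s₇^{1/α}`.
Here `g` carries the `s₇^α` brackets and `h` the `s₇^{1/α}` brackets; the dual basis
map sends `b₀ ↦ c₂, b₁ ↦ −c₃, b₂ ↦ c₀, b₃ ↦ −c₁, b₄ ↦ −α c₄, b₅ ↦ c₅`. -/
theorem stmt17 {g h : Type*}
    [LieRing g] [LieAlgebra ℝ g] [LieRing h] [LieAlgebra ℝ h]
    (α : ℝ) (hα : α ≠ 0)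
    (b : Module.Basis (Fin 6) ℝ g) (c : Module.Basis (Fin 6) ℝ h)
    -- s₇^α on g
    (hb1 : ⁅b 0, b 4⁆ = b 1) (hb2 : ⁅b 1, b 4⁆ = -b 0)
    (hb3 : ⁅b 2, b 4⁆ = α • b 3) (hb4 : ⁅b 3, b 4⁆ = -α • b 2)
    (hb5 : ⁅b 5, b 4⁆ = 0)
    (hb0 : ∀ i j : Fin 6, i ≠ 4 → j ≠ 4 → ⁅b i, b j⁆ = 0)
    -- s₇^{1/α} on h
    (hc1 : ⁅c 0, c 4⁆ = c 1) (hc2 : ⁅c 1, c 4⁆ = -c 0)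
    (hc3 : ⁅c 2, c 4⁆ = α⁻¹ • c 3) (hc4 : ⁅c 3, c 4⁆ = -α⁻¹ • c 2)
    (hc5 : ⁅c 5, c 4⁆ = 0)
    (hc0 : ∀ i j : Fin 6, i ≠ 4 → j ≠ 4 → ⁅c i, c j⁆ = 0) :
    (∀ x y : g, (b.constr ℝ ![c 2, -c 3, c 0, -c 1, -α • c 4, c 5]) ⁅x, y⁆ =
        ⁅(b.constr ℝ ![c 2, -c 3, c 0, -c 1, -α • c 4, c 5]) x,
          (b.constr ℝ ![c 2, -c 3, c 0, -c 1, -α • c 4, c 5]) y⁆) ∧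
      Function.Bijective (b.constr ℝ ![c 2, -c 3, c 0, -c 1, -α • c 4, c 5]) := by
  set u : Fin 6 → ℝ := ![1, -1, 1, -1, -α, 1]
  set σ : Fin 6 → Fin 6 := ![2, 3, 0, 1, 4, 5]
  have hv : ![c 2, -c 3, c 0, -c 1, -α • c 4, c 5] = fun i => u i • c (σ i) := by
    funext i; fin_cases i <;> simp [u, σ]
  have hu : ∀ i, IsUnit (u i) := by intro i; fin_cases i <;> simp [u, hα]
  have hσ : σ.Bijective := by decide
  rw [hv]
  refine ⟨LinearMap.map_lie_of_basis_of_lie_eq_zero _ b 4 hb0 (fun i j hi hj => ?_) ?_,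
    b.bijective_constr_smul_comp c hu hσ⟩
  · have hne : ∀ {i}, i ≠ 4 → σ i ≠ 4 := fun hi h4 => hi (hσ.1 (h4.trans rfl))
    simp only [Module.Basis.constr_basis, smul_lie, lie_smul, hc0 _ _ (hne hi) (hne hj), smul_zero]
  · intro i hi
    fin_cases i <;>
      simp [u, σ, hb1, hb2, hb3, hb4, hb5, hc1, hc2, hc3, hc4, hc5, smul_smul, hα,
        -Module.Basis.constr_apply_fintype] at hi ⊢
end

section
/- For the Lie algebra s₁₁^α = (e¹⁶ − e²⁵, e¹⁵ + e²⁶, −e³⁶ − α e⁴⁵, α e³⁵ − e⁴⁶, 0, 0) with α ≠ 0, the coframe change f¹ = e³, f² = e⁴, f³ = e¹, f⁴ = e², f⁵ = α e⁵, f⁶ = −e⁶ defines a Lie algebra isomorphism s₁₁^α ≅ s₁₁^{1/α}; and for α = 1, swapping e³ and e⁴ gives an isomorphism s₁₁^1 ≅ s₁₂ = (e¹⁶ − e²⁵, e¹⁵ + e²⁶, −e³⁶ + e⁴⁵, −e³⁵ − e⁴⁶, 0, 0). -/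
/-!
Both maps send the basis `b` to a permuted basis rescaled by units, so they are linear
isomorphisms; by bilinearity and antisymmetry of the bracket it then suffices to compare the
brackets `⁅b i, b j⁆` with `i < j`. The second claim is the case `α = 1` of the isomorphism
`s₁₁^α ≅ s₁₁^{-α}` obtained by swapping `e³` and `e⁴`, since `s₁₂ = s₁₁^{-1}`.
-/

namespace Module.Basis

variable {ι R L L' : Type*} [CommRing R] [LieRing L] [LieAlgebra R L] [LieRing L']
  [LieAlgebra R L']

theorem map_lie_of_basis (b : Basis ι R L) (T : L →ₗ[R] L')
    (h : ∀ i j, T ⁅b i, b j⁆ = ⁅T (b i), T (b j)⁆) (x y : L) :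
    T ⁅x, y⁆ = ⁅T x, T y⁆ := by
  have key : (LieModule.toEnd R L L : L →ₗ[R] L →ₗ[R] L).compr₂ T =
      ((LieModule.toEnd R L' L' : L' →ₗ[R] L' →ₗ[R] L') ∘ₗ T).compl₂ T :=
    b.ext fun i => b.ext fun j => by simpa using h i j
  simpa using LinearMap.congr_fun₂ key x y

theorem map_lie_of_lt [LinearOrder ι] (b : Basis ι R L) (T : L →ₗ[R] L')
    (h : ∀ i j, i < j → T ⁅b i, b j⁆ = ⁅T (b i), T (b j)⁆) (x y : L) :
    T ⁅x, y⁆ = ⁅T x, T y⁆ := by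
  refine b.map_lie_of_basis T (fun i j => ?_) x y
  rcases lt_trichotomy i j with hij | rfl | hji
  · exact h i j hij
  · simp
  · rw [← lie_skew, map_neg, h j i hji, lie_skew]

theorem constr_unitsSMul_bijective {M M' : Type*} [AddCommGroup M] [Module R M] [AddCommGroup M']
    [Module R M']
    (b : Basis ι R M) (c : Basis ι R M') (σ : Equiv.Perm ι) (u : ι → Rˣ) :
    Function.Bijective (b.constr R fun i => u i • c (σ i)) := by
  have : b.constr R (fun i => u i • c (σ i)) =
      (b.equiv ((c.reindex σ.symm).unitsSMul u) (Equiv.refl ι)).toLinearMap :=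
    b.ext fun i => by simp [unitsSMul_apply]
  rw [this]
  exact LinearEquiv.bijective _

end Module.Basis

open Module

/-- `b` is the frame dual to a coframe `e¹, …, e⁶` of `s₁₁^a`, indexed from `0`. -/
structure IsS11Basis {R L : Type*} [CommRing R] [LieRing L] [LieAlgebra R L]
    (a : R) (b : Basis (Fin 6) R L) : Prop where
  lie_0_4 : ⁅b 0, b 4⁆ = -b 1
  lie_0_5 : ⁅b 0, b 5⁆ = -b 0
  lie_1_4 : ⁅b 1, b 4⁆ = b 0
  lie_1_5 : ⁅b 1, b 5⁆ = -b 1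
  lie_2_4 : ⁅b 2, b 4⁆ = -a • b 3
  lie_2_5 : ⁅b 2, b 5⁆ = b 2
  lie_3_4 : ⁅b 3, b 4⁆ = a • b 2
  lie_3_5 : ⁅b 3, b 5⁆ = b 3
  lie_4_5 : ⁅b 4, b 5⁆ = 0
  lie_eq_zero : ∀ i j : Fin 6, i ≠ 4 → i ≠ 5 → j ≠ 4 → j ≠ 5 → ⁅b i, b j⁆ = 0

namespace IsS11Basis

variable {L L' : Type*} [LieRing L] [LieRing L']

theorem constr_swap_map_lie_bijective {R : Type*} [CommRing R] [LieAlgebra R L] [LieAlgebra R L']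
    {a : R} {b : Basis (Fin 6) R L} {f : Basis (Fin 6) R L'} (hb : IsS11Basis a b)
    (hf : IsS11Basis (-a) f) :
    (∀ x y : L, (b.constr R ![f 0, f 1, f 3, f 2, f 4, f 5]) ⁅x, y⁆ =
        ⁅(b.constr R ![f 0, f 1, f 3, f 2, f 4, f 5]) x,
          (b.constr R ![f 0, f 1, f 3, f 2, f 4, f 5]) y⁆) ∧
      Function.Bijective (b.constr R ![f 0, f 1, f 3, f 2, f 4, f 5]) := by
  refine ⟨b.map_lie_of_lt _ fun i j hij => ?_, ?_⟩
  · -- without `constr_apply_fintype`, simp pushes `constr` through `-` and `•` to basis vectors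
    obtain ⟨⟩ := hb; obtain ⟨⟩ := hf
    fin_cases i <;> fin_cases j <;> simp [*, -Basis.constr_apply_fintype] at hij ⊢
  · have : ![f 0, f 1, f 3, f 2, f 4, f 5] = fun i => (1 : Rˣ) • f (Equiv.swap 2 3 i) := by
      funext i
      fin_cases i <;> simp [Equiv.swap_apply_of_ne_of_ne]
    rw [this]
    exact b.constr_unitsSMul_bijective f (Equiv.swap 2 3) 1

theorem constr_inv_map_lie_bijective {K : Type*} [Field K] [LieAlgebra K L] [LieAlgebra K L']
    {a : K} (ha : a ≠ 0) {b : Basis (Fin 6) K L} {c : Basis (Fin 6) K L'} (hb : IsS11Basis a b)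
    (hc : IsS11Basis a⁻¹ c) :
    (∀ x y : L, (b.constr K ![c 2, c 3, c 0, c 1, a • c 4, -c 5]) ⁅x, y⁆ =
        ⁅(b.constr K ![c 2, c 3, c 0, c 1, a • c 4, -c 5]) x,
          (b.constr K ![c 2, c 3, c 0, c 1, a • c 4, -c 5]) y⁆) ∧
      Function.Bijective (b.constr K ![c 2, c 3, c 0, c 1, a • c 4, -c 5]) := by
  refine ⟨b.map_lie_of_lt _ fun i j hij => ?_, ?_⟩
  · obtain ⟨⟩ := hb; obtain ⟨⟩ := hc
    fin_cases i <;> fin_cases j <;> simp [*, smul_smul, -Basis.constr_apply_fintype] at hij ⊢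
  · let σ : Equiv.Perm (Fin 6) := Equiv.swap 0 2 * Equiv.swap 1 3
    let u : Fin 6 → Kˣ := ![1, 1, 1, 1, Units.mk0 a ha, -1]
    have : ![c 2, c 3, c 0, c 1, a • c 4, -c 5] = fun i => u i • c (σ i) := by
      funext i
      fin_cases i <;> simp [σ, u, Equiv.swap_apply_of_ne_of_ne, Units.smul_def]
    rw [this]
    exact b.constr_unitsSMul_bijective c σ u

end IsS11Basis

/-- For `s₁₁^α = (e¹⁶−e²⁵, e¹⁵+e²⁶, −e³⁶−αe⁴⁵, αe³⁵−e⁴⁶, 0, 0)` with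
`α ≠ 0`, the coframe change `f¹ = e³, f² = e⁴, f³ = e¹, f⁴ = e², f⁵ = α e⁵, f⁶ = −e⁶`
gives a Lie algebra isomorphism `s₁₁^α ≅ s₁₁^{1/α}` (dual basis map:
`b₀ ↦ c₂, b₁ ↦ c₃, b₂ ↦ c₀, b₃ ↦ c₁, b₄ ↦ α c₄, b₅ ↦ −c₅`); and for `α = 1`,
swapping `e³` and `e⁴` gives `s₁₁^1 ≅ s₁₂ = (e¹⁶−e²⁵, e¹⁵+e²⁶, −e³⁶+e⁴⁵, −e³⁵−e⁴⁶, 0, 0)`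
(dual basis map `b₂ ↦ f₃, b₃ ↦ f₂`, identity on the others). -/
theorem stmt18 {g h k : Type*}
    [LieRing g] [LieAlgebra ℝ g] [LieRing h] [LieAlgebra ℝ h] [LieRing k] [LieAlgebra ℝ k]
    (α : ℝ) (hα : α ≠ 0)
    (b : Module.Basis (Fin 6) ℝ g) (c : Module.Basis (Fin 6) ℝ h) (f : Module.Basis (Fin 6) ℝ k)
    -- s₁₁^α on g
    (hb04 : ⁅b 0, b 4⁆ = -b 1) (hb05 : ⁅b 0, b 5⁆ = -b 0)
    (hb14 : ⁅b 1, b 4⁆ = b 0) (hb15 : ⁅b 1, b 5⁆ = -b 1)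
    (hb24 : ⁅b 2, b 4⁆ = -α • b 3) (hb25 : ⁅b 2, b 5⁆ = b 2)
    (hb34 : ⁅b 3, b 4⁆ = α • b 2) (hb35 : ⁅b 3, b 5⁆ = b 3)
    (hb45 : ⁅b 4, b 5⁆ = 0)
    (hb0 : ∀ i j : Fin 6, i ≠ 4 → i ≠ 5 → j ≠ 4 → j ≠ 5 → ⁅b i, b j⁆ = 0)
    -- s₁₁^{1/α} on h
    (hc04 : ⁅c 0, c 4⁆ = -c 1) (hc05 : ⁅c 0, c 5⁆ = -c 0)
    (hc14 : ⁅c 1, c 4⁆ = c 0) (hc15 : ⁅c 1, c 5⁆ = -c 1)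
    (hc24 : ⁅c 2, c 4⁆ = -α⁻¹ • c 3) (hc25 : ⁅c 2, c 5⁆ = c 2)
    (hc34 : ⁅c 3, c 4⁆ = α⁻¹ • c 2) (hc35 : ⁅c 3, c 5⁆ = c 3)
    (hc45 : ⁅c 4, c 5⁆ = 0)
    (hc0 : ∀ i j : Fin 6, i ≠ 4 → i ≠ 5 → j ≠ 4 → j ≠ 5 → ⁅c i, c j⁆ = 0)
    -- s₁₂ on k
    (hf04 : ⁅f 0, f 4⁆ = -f 1) (hf05 : ⁅f 0, f 5⁆ = -f 0)
    (hf14 : ⁅f 1, f 4⁆ = f 0) (hf15 : ⁅f 1, f 5⁆ = -f 1)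
    (hf24 : ⁅f 2, f 4⁆ = f 3) (hf25 : ⁅f 2, f 5⁆ = f 2)
    (hf34 : ⁅f 3, f 4⁆ = -f 2) (hf35 : ⁅f 3, f 5⁆ = f 3)
    (hf45 : ⁅f 4, f 5⁆ = 0)
    (hf0 : ∀ i j : Fin 6, i ≠ 4 → i ≠ 5 → j ≠ 4 → j ≠ 5 → ⁅f i, f j⁆ = 0) :
    ((∀ x y : g, (b.constr ℝ ![c 2, c 3, c 0, c 1, α • c 4, -c 5]) ⁅x, y⁆ =
        ⁅(b.constr ℝ ![c 2, c 3, c 0, c 1, α • c 4, -c 5]) x,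
          (b.constr ℝ ![c 2, c 3, c 0, c 1, α • c 4, -c 5]) y⁆) ∧
      Function.Bijective (b.constr ℝ ![c 2, c 3, c 0, c 1, α • c 4, -c 5])) ∧
    (α = 1 →
      (∀ x y : g, (b.constr ℝ ![f 0, f 1, f 3, f 2, f 4, f 5]) ⁅x, y⁆ =
        ⁅(b.constr ℝ ![f 0, f 1, f 3, f 2, f 4, f 5]) x,
          (b.constr ℝ ![f 0, f 1, f 3, f 2, f 4, f 5]) y⁆) ∧
      Function.Bijective (b.constr ℝ ![f 0, f 1, f 3, f 2, f 4, f 5])) := by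
  have hb : IsS11Basis α b := ⟨hb04, hb05, hb14, hb15, hb24, hb25, hb34, hb35, hb45, hb0⟩
  have hc : IsS11Basis α⁻¹ c := ⟨hc04, hc05, hc14, hc15, hc24, hc25, hc34, hc35, hc45, hc0⟩
  refine ⟨hb.constr_inv_map_lie_bijective hα hc, fun hα1 => ?_⟩
  subst hα1
  have hf : IsS11Basis (-1) f :=
    ⟨hf04, hf05, hf14, hf15, by simpa using hf24, hf25, by simpa using hf34, hf35, hf45, hf0⟩
  exact hb.constr_swap_map_lie_bijective hf
end

section
/- Let X be described at the invariant level by a Lie algebra with (1,0)-coframe {ω¹,ω²,ω³} satisfying dωʲ = Aʲ ω³∧ωʲ + Bʲ ω̄³∧ωʲ for j = 1,2 and dω³ = 0 where Σⱼ(Aʲ + conj(Bʲ)) = 0. If both an invariant SKT form (∂∂̄F₁ = 0) and an invariant balanced form (dF₂² = 0) exist, with F₁, F₂ positive-definite (1,1)-forms, then there exists an invariant Kähler form on the Lie algebra. -/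
/-- The general invariant Hermitian (1,1)-form
`2F = i r² ω¹∧ω̄¹ + i s² ω²∧ω̄² + i t² ω³∧ω̄³ + u ω¹∧ω̄² − ū ω²∧ω̄¹ + v ω²∧ω̄³ − v̄ ω³∧ω̄²
 + z ω¹∧ω̄³ − z̄ ω³∧ω̄¹`. -/
noncomputable def hermForm {Λ : Type*} [Ring Λ] [Algebra ℂ Λ]
    (ω1 ω2 ω3 ωb1 ωb2 ωb3 : Λ) (r s t : ℝ) (u v z : ℂ) : Λ :=
  (1 / 2 : ℂ) • ((Complex.I * (r : ℂ) ^ 2) • (ω1 * ωb1)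
    + (Complex.I * (s : ℂ) ^ 2) • (ω2 * ωb2)
    + (Complex.I * (t : ℂ) ^ 2) • (ω3 * ωb3)
    + u • (ω1 * ωb2) - (starRingEnd ℂ) u • (ω2 * ωb1)
    + v • (ω2 * ωb3) - (starRingEnd ℂ) v • (ω3 * ωb2)
    + z • (ω1 * ωb3) - (starRingEnd ℂ) z • (ω3 * ωb1))

/-- Positive definiteness conditions for the coefficients of `hermForm`. -/
def hermPos (r s t : ℝ) (u v z : ℂ) : Prop :=
  r ≠ 0 ∧ s ≠ 0 ∧ t ≠ 0 ∧
  Complex.normSq u < r ^ 2 * s ^ 2 ∧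
  Complex.normSq v < s ^ 2 * t ^ 2 ∧
  Complex.normSq z < r ^ 2 * t ^ 2 ∧
  t ^ 2 * Complex.normSq u + r ^ 2 * Complex.normSq v + s ^ 2 * Complex.normSq z <
    r ^ 2 * s ^ 2 * t ^ 2
      + 2 * (Complex.I * (starRingEnd ℂ) u * (starRingEnd ℂ) v * z).re


private lemma sq_zero_of_anti {Λ : Type*} [Ring Λ] [Algebra ℂ Λ] {x : Λ}
    (h : x * x = -(x * x)) : x * x = 0 := by
  have h2 : (2 : ℂ) • (x * x) = 0 := by
    rw [two_smul]
    nth_rewrite 1 [h]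
    exact neg_add_cancel _
  calc x * x = ((1/2 : ℂ) * 2) • (x * x) := by norm_num
  _ = (1/2 : ℂ) • ((2 : ℂ) • (x * x)) := by rw [mul_smul]
  _ = 0 := by rw [h2, smul_zero]

/-- For the splitting-type structure equations
`dωʲ = Aʲ ω³∧ωʲ + Bʲ ω̄³∧ωʲ` (j = 1,2), `dω³ = 0`, with unimodularity
`Σⱼ (Aʲ + conj Bʲ) = 0`: if an invariant positive-definite SKT form (`∂∂̄F₁ = 0`)
and an invariant positive-definite balanced form (`d(F₂∧F₂) = 0`) exist, then there
exists an invariant positive-definite Kähler form (`dF = 0`). -/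
theorem stmt19 {Λ : Type*} [Ring Λ] [Algebra ℂ Λ]
    (d dp db : Λ →ₗ[ℂ] Λ) (ω1 ω2 ω3 ωb1 ωb2 ωb3 : Λ) (A1 A2 B1 B2 : ℂ)
    (huni : A1 + (starRingEnd ℂ) B1 + A2 + (starRingEnd ℂ) B2 = 0)
    (hanti : ∀ x ∈ ({ω1, ω2, ω3, ωb1, ωb2, ωb3} : Set Λ),
      ∀ y ∈ ({ω1, ω2, ω3, ωb1, ωb2, ωb3} : Set Λ), x * y = -(y * x))
    (hdLeib : ∀ x ∈ Submodule.span ℂ ({ω1, ω2, ω3, ωb1, ωb2, ωb3} : Set Λ),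
      ∀ y : Λ, d (x * y) = d x * y - x * d y)
    (hpLeib : ∀ x ∈ Submodule.span ℂ ({ω1, ω2, ω3, ωb1, ωb2, ωb3} : Set Λ),
      ∀ y : Λ, dp (x * y) = dp x * y - x * dp y)
    (hbLeib : ∀ x ∈ Submodule.span ℂ ({ω1, ω2, ω3, ωb1, ωb2, ωb3} : Set Λ),
      ∀ y : Λ, db (x * y) = db x * y - x * db y)
    (hdpb : ∀ x : Λ, d x = dp x + db x)
    (hp1 : dp ω1 = A1 • (ω3 * ω1)) (hb1 : db ω1 = B1 • (ωb3 * ω1))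
    (hp2 : dp ω2 = A2 • (ω3 * ω2)) (hb2 : db ω2 = B2 • (ωb3 * ω2))
    (hp3 : dp ω3 = 0) (hb3 : db ω3 = 0)
    (hpb1 : dp ωb1 = (starRingEnd ℂ) B1 • (ω3 * ωb1))
    (hbb1 : db ωb1 = (starRingEnd ℂ) A1 • (ωb3 * ωb1))
    (hpb2 : dp ωb2 = (starRingEnd ℂ) B2 • (ω3 * ωb2))
    (hbb2 : db ωb2 = (starRingEnd ℂ) A2 • (ωb3 * ωb2))
    (hpb3 : dp ωb3 = 0) (hbb3 : db ωb3 = 0)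
    (hindep4 : LinearIndependent ℂ ![ω1 * ω3 * ωb2 * ωb3, ω2 * ω3 * ωb1 * ωb3,
      ω1 * ω3 * ωb1 * ωb3, ω2 * ω3 * ωb2 * ωb3])
    (hSKT : ∃ r s t : ℝ, ∃ u v z : ℂ, hermPos r s t u v z ∧
      dp (db (hermForm ω1 ω2 ω3 ωb1 ωb2 ωb3 r s t u v z)) = 0)
    (hbal : ∃ r s t : ℝ, ∃ u v z : ℂ, hermPos r s t u v z ∧
      d (hermForm ω1 ω2 ω3 ωb1 ωb2 ωb3 r s t u v z
        * hermForm ω1 ω2 ω3 ωb1 ωb2 ωb3 r s t u v z) = 0) :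
    ∃ r s t : ℝ, ∃ u v z : ℂ, hermPos r s t u v z ∧
      d (hermForm ω1 ω2 ω3 ωb1 ωb2 ωb3 r s t u v z) = 0 := by
  classical
  obtain ⟨r, s, t, u, v, z, hpos, hskt⟩ := hSKT
  have m1 : ω1 ∈ ({ω1, ω2, ω3, ωb1, ωb2, ωb3} : Set Λ) := by left; rfl
  have m2 : ω2 ∈ ({ω1, ω2, ω3, ωb1, ωb2, ωb3} : Set Λ) := by right; left; rfl
  have m3 : ω3 ∈ ({ω1, ω2, ω3, ωb1, ωb2, ωb3} : Set Λ) := by right; right; left; rfl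
  have m4 : ωb1 ∈ ({ω1, ω2, ω3, ωb1, ωb2, ωb3} : Set Λ) := by right; right; right; left; rfl
  have m5 : ωb2 ∈ ({ω1, ω2, ω3, ωb1, ωb2, ωb3} : Set Λ) := by right; right; right; right; left; rfl
  have m6 : ωb3 ∈ ({ω1, ω2, ω3, ωb1, ωb2, ωb3} : Set Λ) := by
    right; right; right; right; right; exact rfl
  have n1 := Submodule.subset_span (R := ℂ) m1
  have n2 := Submodule.subset_span (R := ℂ) m2
  have n3 := Submodule.subset_span (R := ℂ) m3
  have n4 := Submodule.subset_span (R := ℂ) m4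
  have n5 := Submodule.subset_span (R := ℂ) m5
  have n6 := Submodule.subset_span (R := ℂ) m6
  have sw21 : ω2 * ω1 = -(ω1 * ω2) := hanti ω2 m2 ω1 m1
  have tw21 : ∀ c : Λ, ω2 * (ω1 * c) = -(ω1 * (ω2 * c)) := fun c => by
    rw [← mul_assoc, sw21, neg_mul, mul_assoc]
  have sw31 : ω3 * ω1 = -(ω1 * ω3) := hanti ω3 m3 ω1 m1
  have tw31 : ∀ c : Λ, ω3 * (ω1 * c) = -(ω1 * (ω3 * c)) := fun c => by
    rw [← mul_assoc, sw31, neg_mul, mul_assoc]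
  have sw32 : ω3 * ω2 = -(ω2 * ω3) := hanti ω3 m3 ω2 m2
  have tw32 : ∀ c : Λ, ω3 * (ω2 * c) = -(ω2 * (ω3 * c)) := fun c => by
    rw [← mul_assoc, sw32, neg_mul, mul_assoc]
  have sw41 : ωb1 * ω1 = -(ω1 * ωb1) := hanti ωb1 m4 ω1 m1
  have tw41 : ∀ c : Λ, ωb1 * (ω1 * c) = -(ω1 * (ωb1 * c)) := fun c => by
    rw [← mul_assoc, sw41, neg_mul, mul_assoc]
  have sw42 : ωb1 * ω2 = -(ω2 * ωb1) := hanti ωb1 m4 ω2 m2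
  have tw42 : ∀ c : Λ, ωb1 * (ω2 * c) = -(ω2 * (ωb1 * c)) := fun c => by
    rw [← mul_assoc, sw42, neg_mul, mul_assoc]
  have sw43 : ωb1 * ω3 = -(ω3 * ωb1) := hanti ωb1 m4 ω3 m3
  have tw43 : ∀ c : Λ, ωb1 * (ω3 * c) = -(ω3 * (ωb1 * c)) := fun c => by
    rw [← mul_assoc, sw43, neg_mul, mul_assoc]
  have sw51 : ωb2 * ω1 = -(ω1 * ωb2) := hanti ωb2 m5 ω1 m1
  have tw51 : ∀ c : Λ, ωb2 * (ω1 * c) = -(ω1 * (ωb2 * c)) := fun c => by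
    rw [← mul_assoc, sw51, neg_mul, mul_assoc]
  have sw52 : ωb2 * ω2 = -(ω2 * ωb2) := hanti ωb2 m5 ω2 m2
  have tw52 : ∀ c : Λ, ωb2 * (ω2 * c) = -(ω2 * (ωb2 * c)) := fun c => by
    rw [← mul_assoc, sw52, neg_mul, mul_assoc]
  have sw53 : ωb2 * ω3 = -(ω3 * ωb2) := hanti ωb2 m5 ω3 m3
  have tw53 : ∀ c : Λ, ωb2 * (ω3 * c) = -(ω3 * (ωb2 * c)) := fun c => by
    rw [← mul_assoc, sw53, neg_mul, mul_assoc]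
  have sw54 : ωb2 * ωb1 = -(ωb1 * ωb2) := hanti ωb2 m5 ωb1 m4
  have tw54 : ∀ c : Λ, ωb2 * (ωb1 * c) = -(ωb1 * (ωb2 * c)) := fun c => by
    rw [← mul_assoc, sw54, neg_mul, mul_assoc]
  have sw61 : ωb3 * ω1 = -(ω1 * ωb3) := hanti ωb3 m6 ω1 m1
  have tw61 : ∀ c : Λ, ωb3 * (ω1 * c) = -(ω1 * (ωb3 * c)) := fun c => by
    rw [← mul_assoc, sw61, neg_mul, mul_assoc]
  have sw62 : ωb3 * ω2 = -(ω2 * ωb3) := hanti ωb3 m6 ω2 m2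
  have tw62 : ∀ c : Λ, ωb3 * (ω2 * c) = -(ω2 * (ωb3 * c)) := fun c => by
    rw [← mul_assoc, sw62, neg_mul, mul_assoc]
  have sw63 : ωb3 * ω3 = -(ω3 * ωb3) := hanti ωb3 m6 ω3 m3
  have tw63 : ∀ c : Λ, ωb3 * (ω3 * c) = -(ω3 * (ωb3 * c)) := fun c => by
    rw [← mul_assoc, sw63, neg_mul, mul_assoc]
  have sw64 : ωb3 * ωb1 = -(ωb1 * ωb3) := hanti ωb3 m6 ωb1 m4
  have tw64 : ∀ c : Λ, ωb3 * (ωb1 * c) = -(ωb1 * (ωb3 * c)) := fun c => by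
    rw [← mul_assoc, sw64, neg_mul, mul_assoc]
  have sw65 : ωb3 * ωb2 = -(ωb2 * ωb3) := hanti ωb3 m6 ωb2 m5
  have tw65 : ∀ c : Λ, ωb3 * (ωb2 * c) = -(ωb2 * (ωb3 * c)) := fun c => by
    rw [← mul_assoc, sw65, neg_mul, mul_assoc]
  have sq1 : ω1 * ω1 = 0 := sq_zero_of_anti (hanti ω1 m1 ω1 m1)
  have tq1 : ∀ c : Λ, ω1 * (ω1 * c) = 0 := fun c => by
    rw [← mul_assoc, sq1, zero_mul]
  have sq2 : ω2 * ω2 = 0 := sq_zero_of_anti (hanti ω2 m2 ω2 m2)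
  have tq2 : ∀ c : Λ, ω2 * (ω2 * c) = 0 := fun c => by
    rw [← mul_assoc, sq2, zero_mul]
  have sq3 : ω3 * ω3 = 0 := sq_zero_of_anti (hanti ω3 m3 ω3 m3)
  have tq3 : ∀ c : Λ, ω3 * (ω3 * c) = 0 := fun c => by
    rw [← mul_assoc, sq3, zero_mul]
  have sq4 : ωb1 * ωb1 = 0 := sq_zero_of_anti (hanti ωb1 m4 ωb1 m4)
  have tq4 : ∀ c : Λ, ωb1 * (ωb1 * c) = 0 := fun c => by
    rw [← mul_assoc, sq4, zero_mul]
  have sq5 : ωb2 * ωb2 = 0 := sq_zero_of_anti (hanti ωb2 m5 ωb2 m5)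
  have tq5 : ∀ c : Λ, ωb2 * (ωb2 * c) = 0 := fun c => by
    rw [← mul_assoc, sq5, zero_mul]
  have sq6 : ωb3 * ωb3 = 0 := sq_zero_of_anti (hanti ωb3 m6 ωb3 m6)
  have tq6 : ∀ c : Λ, ωb3 * (ωb3 * c) = 0 := fun c => by
    rw [← mul_assoc, sq6, zero_mul]
  -- db of the 2-forms
  have hdb11 : db (ω1 * ωb1)
      = ((starRingEnd ℂ) A1 + B1) • (ω1 * (ωb1 * ωb3)) := by
    rw [hbLeib ω1 n1, hb1, hbb1]
    simp only [mul_assoc, smul_mul_assoc, mul_smul_comm, neg_mul, mul_neg, smul_neg, neg_neg, mul_zero, zero_mul, smul_zero, zero_smul, smul_smul, neg_zero, sw21, tw21, sw31, tw31, sw32, tw32, sw41, tw41, sw42, tw42, sw43, tw43, sw51, tw51, sw52, tw52, sw53, tw53, sw54, tw54, sw61, tw61, sw62, tw62, sw63, tw63, sw64, tw64, sw65, tw65, sq1, tq1, sq2, tq2, sq3, tq3, sq4, tq4, sq5, tq5, sq6, tq6]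
    module
  have hdb22 : db (ω2 * ωb2)
      = ((starRingEnd ℂ) A2 + B2) • (ω2 * (ωb2 * ωb3)) := by
    rw [hbLeib ω2 n2, hb2, hbb2]
    simp only [mul_assoc, smul_mul_assoc, mul_smul_comm, neg_mul, mul_neg, smul_neg, neg_neg, mul_zero, zero_mul, smul_zero, zero_smul, smul_smul, neg_zero, sw21, tw21, sw31, tw31, sw32, tw32, sw41, tw41, sw42, tw42, sw43, tw43, sw51, tw51, sw52, tw52, sw53, tw53, sw54, tw54, sw61, tw61, sw62, tw62, sw63, tw63, sw64, tw64, sw65, tw65, sq1, tq1, sq2, tq2, sq3, tq3, sq4, tq4, sq5, tq5, sq6, tq6]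
    module
  have hdb33 : db (ω3 * ωb3) = 0 := by
    rw [hbLeib ω3 n3, hb3, hbb3]
    simp
  have hdb12 : db (ω1 * ωb2)
      = ((starRingEnd ℂ) A2 + B1) • (ω1 * (ωb2 * ωb3)) := by
    rw [hbLeib ω1 n1, hb1, hbb2]
    simp only [mul_assoc, smul_mul_assoc, mul_smul_comm, neg_mul, mul_neg, smul_neg, neg_neg, mul_zero, zero_mul, smul_zero, zero_smul, smul_smul, neg_zero, sw21, tw21, sw31, tw31, sw32, tw32, sw41, tw41, sw42, tw42, sw43, tw43, sw51, tw51, sw52, tw52, sw53, tw53, sw54, tw54, sw61, tw61, sw62, tw62, sw63, tw63, sw64, tw64, sw65, tw65, sq1, tq1, sq2, tq2, sq3, tq3, sq4, tq4, sq5, tq5, sq6, tq6]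
    module
  have hdb21 : db (ω2 * ωb1)
      = ((starRingEnd ℂ) A1 + B2) • (ω2 * (ωb1 * ωb3)) := by
    rw [hbLeib ω2 n2, hb2, hbb1]
    simp only [mul_assoc, smul_mul_assoc, mul_smul_comm, neg_mul, mul_neg, smul_neg, neg_neg, mul_zero, zero_mul, smul_zero, zero_smul, smul_smul, neg_zero, sw21, tw21, sw31, tw31, sw32, tw32, sw41, tw41, sw42, tw42, sw43, tw43, sw51, tw51, sw52, tw52, sw53, tw53, sw54, tw54, sw61, tw61, sw62, tw62, sw63, tw63, sw64, tw64, sw65, tw65, sq1, tq1, sq2, tq2, sq3, tq3, sq4, tq4, sq5, tq5, sq6, tq6]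
    module
  have hdb23 : db (ω2 * ωb3) = 0 := by
    rw [hbLeib ω2 n2, hb2, hbb3]
    simp only [mul_assoc, smul_mul_assoc, mul_smul_comm, neg_mul, mul_neg, smul_neg, neg_neg, mul_zero, zero_mul, smul_zero, zero_smul, smul_smul, neg_zero, sw21, tw21, sw31, tw31, sw32, tw32, sw41, tw41, sw42, tw42, sw43, tw43, sw51, tw51, sw52, tw52, sw53, tw53, sw54, tw54, sw61, tw61, sw62, tw62, sw63, tw63, sw64, tw64, sw65, tw65, sq1, tq1, sq2, tq2, sq3, tq3, sq4, tq4, sq5, tq5, sq6, tq6]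
    module
  have hdb32 : db (ω3 * ωb2)
      = (starRingEnd ℂ) A2 • (ω3 * (ωb2 * ωb3)) := by
    rw [hbLeib ω3 n3, hb3, hbb2]
    simp only [mul_assoc, smul_mul_assoc, mul_smul_comm, neg_mul, mul_neg, smul_neg, neg_neg, mul_zero, zero_mul, smul_zero, zero_smul, smul_smul, neg_zero, sw21, tw21, sw31, tw31, sw32, tw32, sw41, tw41, sw42, tw42, sw43, tw43, sw51, tw51, sw52, tw52, sw53, tw53, sw54, tw54, sw61, tw61, sw62, tw62, sw63, tw63, sw64, tw64, sw65, tw65, sq1, tq1, sq2, tq2, sq3, tq3, sq4, tq4, sq5, tq5, sq6, tq6]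
    module
  have hdb13 : db (ω1 * ωb3) = 0 := by
    rw [hbLeib ω1 n1, hb1, hbb3]
    simp only [mul_assoc, smul_mul_assoc, mul_smul_comm, neg_mul, mul_neg, smul_neg, neg_neg, mul_zero, zero_mul, smul_zero, zero_smul, smul_smul, neg_zero, sw21, tw21, sw31, tw31, sw32, tw32, sw41, tw41, sw42, tw42, sw43, tw43, sw51, tw51, sw52, tw52, sw53, tw53, sw54, tw54, sw61, tw61, sw62, tw62, sw63, tw63, sw64, tw64, sw65, tw65, sq1, tq1, sq2, tq2, sq3, tq3, sq4, tq4, sq5, tq5, sq6, tq6]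
    module
  have hdb31 : db (ω3 * ωb1)
      = (starRingEnd ℂ) A1 • (ω3 * (ωb1 * ωb3)) := by
    rw [hbLeib ω3 n3, hb3, hbb1]
    simp only [mul_assoc, smul_mul_assoc, mul_smul_comm, neg_mul, mul_neg, smul_neg, neg_neg, mul_zero, zero_mul, smul_zero, zero_smul, smul_smul, neg_zero, sw21, tw21, sw31, tw31, sw32, tw32, sw41, tw41, sw42, tw42, sw43, tw43, sw51, tw51, sw52, tw52, sw53, tw53, sw54, tw54, sw61, tw61, sw62, tw62, sw63, tw63, sw64, tw64, sw65, tw65, sq1, tq1, sq2, tq2, sq3, tq3, sq4, tq4, sq5, tq5, sq6, tq6]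
    module
  -- dp of 2-forms
  have hdp11 : dp (ω1 * ωb1)
      = (-(A1 + (starRingEnd ℂ) B1)) • (ω1 * (ω3 * ωb1)) := by
    rw [hpLeib ω1 n1, hp1, hpb1]
    simp only [mul_assoc, smul_mul_assoc, mul_smul_comm, neg_mul, mul_neg, smul_neg, neg_neg, mul_zero, zero_mul, smul_zero, zero_smul, smul_smul, neg_zero, sw21, tw21, sw31, tw31, sw32, tw32, sw41, tw41, sw42, tw42, sw43, tw43, sw51, tw51, sw52, tw52, sw53, tw53, sw54, tw54, sw61, tw61, sw62, tw62, sw63, tw63, sw64, tw64, sw65, tw65, sq1, tq1, sq2, tq2, sq3, tq3, sq4, tq4, sq5, tq5, sq6, tq6]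
    module
  have hdp22 : dp (ω2 * ωb2)
      = (-(A2 + (starRingEnd ℂ) B2)) • (ω2 * (ω3 * ωb2)) := by
    rw [hpLeib ω2 n2, hp2, hpb2]
    simp only [mul_assoc, smul_mul_assoc, mul_smul_comm, neg_mul, mul_neg, smul_neg, neg_neg, mul_zero, zero_mul, smul_zero, zero_smul, smul_smul, neg_zero, sw21, tw21, sw31, tw31, sw32, tw32, sw41, tw41, sw42, tw42, sw43, tw43, sw51, tw51, sw52, tw52, sw53, tw53, sw54, tw54, sw61, tw61, sw62, tw62, sw63, tw63, sw64, tw64, sw65, tw65, sq1, tq1, sq2, tq2, sq3, tq3, sq4, tq4, sq5, tq5, sq6, tq6]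
    module
  have hdp33 : dp (ω3 * ωb3) = 0 := by
    rw [hpLeib ω3 n3, hp3, hpb3]
    simp
  have hdpb13 : dp (ωb1 * ωb3)
      = (starRingEnd ℂ) B1 • (ω3 * (ωb1 * ωb3)) := by
    rw [hpLeib ωb1 n4, hpb1, hpb3]
    simp only [mul_assoc, smul_mul_assoc, mul_smul_comm, neg_mul, mul_neg, smul_neg, neg_neg, mul_zero, zero_mul, smul_zero, zero_smul, smul_smul, neg_zero, sw21, tw21, sw31, tw31, sw32, tw32, sw41, tw41, sw42, tw42, sw43, tw43, sw51, tw51, sw52, tw52, sw53, tw53, sw54, tw54, sw61, tw61, sw62, tw62, sw63, tw63, sw64, tw64, sw65, tw65, sq1, tq1, sq2, tq2, sq3, tq3, sq4, tq4, sq5, tq5, sq6, tq6]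
    module
  have hdpb23 : dp (ωb2 * ωb3)
      = (starRingEnd ℂ) B2 • (ω3 * (ωb2 * ωb3)) := by
    rw [hpLeib ωb2 n5, hpb2, hpb3]
    simp only [mul_assoc, smul_mul_assoc, mul_smul_comm, neg_mul, mul_neg, smul_neg, neg_neg, mul_zero, zero_mul, smul_zero, zero_smul, smul_smul, neg_zero, sw21, tw21, sw31, tw31, sw32, tw32, sw41, tw41, sw42, tw42, sw43, tw43, sw51, tw51, sw52, tw52, sw53, tw53, sw54, tw54, sw61, tw61, sw62, tw62, sw63, tw63, sw64, tw64, sw65, tw65, sq1, tq1, sq2, tq2, sq3, tq3, sq4, tq4, sq5, tq5, sq6, tq6]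
    module
  -- dp of the 3-forms coming from db
  have hdp3a : dp (ω1 * (ωb1 * ωb3))
      = (-(A1 + (starRingEnd ℂ) B1)) • (ω1 * (ω3 * (ωb1 * ωb3))) := by
    rw [hpLeib ω1 n1, hp1, hdpb13]
    simp only [mul_assoc, smul_mul_assoc, mul_smul_comm, neg_mul, mul_neg, smul_neg, neg_neg, mul_zero, zero_mul, smul_zero, zero_smul, smul_smul, neg_zero, sw21, tw21, sw31, tw31, sw32, tw32, sw41, tw41, sw42, tw42, sw43, tw43, sw51, tw51, sw52, tw52, sw53, tw53, sw54, tw54, sw61, tw61, sw62, tw62, sw63, tw63, sw64, tw64, sw65, tw65, sq1, tq1, sq2, tq2, sq3, tq3, sq4, tq4, sq5, tq5, sq6, tq6]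
    module
  have hdp3b : dp (ω2 * (ωb2 * ωb3))
      = (-(A2 + (starRingEnd ℂ) B2)) • (ω2 * (ω3 * (ωb2 * ωb3))) := by
    rw [hpLeib ω2 n2, hp2, hdpb23]
    simp only [mul_assoc, smul_mul_assoc, mul_smul_comm, neg_mul, mul_neg, smul_neg, neg_neg, mul_zero, zero_mul, smul_zero, zero_smul, smul_smul, neg_zero, sw21, tw21, sw31, tw31, sw32, tw32, sw41, tw41, sw42, tw42, sw43, tw43, sw51, tw51, sw52, tw52, sw53, tw53, sw54, tw54, sw61, tw61, sw62, tw62, sw63, tw63, sw64, tw64, sw65, tw65, sq1, tq1, sq2, tq2, sq3, tq3, sq4, tq4, sq5, tq5, sq6, tq6]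
    module
  have hdp3c : dp (ω1 * (ωb2 * ωb3))
      = (-(A1 + (starRingEnd ℂ) B2)) • (ω1 * (ω3 * (ωb2 * ωb3))) := by
    rw [hpLeib ω1 n1, hp1, hdpb23]
    simp only [mul_assoc, smul_mul_assoc, mul_smul_comm, neg_mul, mul_neg, smul_neg, neg_neg, mul_zero, zero_mul, smul_zero, zero_smul, smul_smul, neg_zero, sw21, tw21, sw31, tw31, sw32, tw32, sw41, tw41, sw42, tw42, sw43, tw43, sw51, tw51, sw52, tw52, sw53, tw53, sw54, tw54, sw61, tw61, sw62, tw62, sw63, tw63, sw64, tw64, sw65, tw65, sq1, tq1, sq2, tq2, sq3, tq3, sq4, tq4, sq5, tq5, sq6, tq6]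
    module
  have hdp3d : dp (ω2 * (ωb1 * ωb3))
      = (-(A2 + (starRingEnd ℂ) B1)) • (ω2 * (ω3 * (ωb1 * ωb3))) := by
    rw [hpLeib ω2 n2, hp2, hdpb13]
    simp only [mul_assoc, smul_mul_assoc, mul_smul_comm, neg_mul, mul_neg, smul_neg, neg_neg, mul_zero, zero_mul, smul_zero, zero_smul, smul_smul, neg_zero, sw21, tw21, sw31, tw31, sw32, tw32, sw41, tw41, sw42, tw42, sw43, tw43, sw51, tw51, sw52, tw52, sw53, tw53, sw54, tw54, sw61, tw61, sw62, tw62, sw63, tw63, sw64, tw64, sw65, tw65, sq1, tq1, sq2, tq2, sq3, tq3, sq4, tq4, sq5, tq5, sq6, tq6]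
    module
  have hdp3e : dp (ω3 * (ωb2 * ωb3)) = 0 := by
    rw [hpLeib ω3 n3, hp3, hdpb23]
    simp only [mul_assoc, smul_mul_assoc, mul_smul_comm, neg_mul, mul_neg, smul_neg, neg_neg, mul_zero, zero_mul, smul_zero, zero_smul, smul_smul, neg_zero, sw21, tw21, sw31, tw31, sw32, tw32, sw41, tw41, sw42, tw42, sw43, tw43, sw51, tw51, sw52, tw52, sw53, tw53, sw54, tw54, sw61, tw61, sw62, tw62, sw63, tw63, sw64, tw64, sw65, tw65, sq1, tq1, sq2, tq2, sq3, tq3, sq4, tq4, sq5, tq5, sq6, tq6]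
    module
  have hdp3f : dp (ω3 * (ωb1 * ωb3)) = 0 := by
    rw [hpLeib ω3 n3, hp3, hdpb13]
    simp only [mul_assoc, smul_mul_assoc, mul_smul_comm, neg_mul, mul_neg, smul_neg, neg_neg, mul_zero, zero_mul, smul_zero, zero_smul, smul_smul, neg_zero, sw21, tw21, sw31, tw31, sw32, tw32, sw41, tw41, sw42, tw42, sw43, tw43, sw51, tw51, sw52, tw52, sw53, tw53, sw54, tw54, sw61, tw61, sw62, tw62, sw63, tw63, sw64, tw64, sw65, tw65, sq1, tq1, sq2, tq2, sq3, tq3, sq4, tq4, sq5, tq5, sq6, tq6]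
    module
  -- the key identity for ∂∂̄F
  have hkey : dp (db (hermForm ω1 ω2 ω3 ωb1 ωb2 ωb3 r s t u v z))
      = (-(1/2 : ℂ) * u * (((starRingEnd ℂ) A2 + B1) * (A1 + (starRingEnd ℂ) B2)))
          • (ω1 * (ω3 * (ωb2 * ωb3)))
        + ((1/2 : ℂ) * (starRingEnd ℂ) u
            * (((starRingEnd ℂ) A1 + B2) * (A2 + (starRingEnd ℂ) B1)))
          • (ω2 * (ω3 * (ωb1 * ωb3)))
        + (-(1/2 : ℂ) * (Complex.I * (r : ℂ) ^ 2)
            * (((starRingEnd ℂ) A1 + B1) * (A1 + (starRingEnd ℂ) B1)))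
          • (ω1 * (ω3 * (ωb1 * ωb3)))
        + (-(1/2 : ℂ) * (Complex.I * (s : ℂ) ^ 2)
            * (((starRingEnd ℂ) A2 + B2) * (A2 + (starRingEnd ℂ) B2)))
          • (ω2 * (ω3 * (ωb2 * ωb3))) := by
    rw [hermForm]
    simp only [map_smul, map_add, map_sub]
    rw [hdb11, hdb22, hdb33, hdb12, hdb21, hdb23, hdb32, hdb13, hdb31]
    simp only [map_smul, map_zero, smul_zero]
    rw [hdp3a, hdp3b, hdp3c, hdp3d, hdp3e, hdp3f]
    simp only [smul_smul, smul_zero]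
    module
  rw [hkey] at hskt
  -- use linear independence to extract the coefficient of ω1∧ω3∧ω̄1∧ω̄3
  have hco := Fintype.linearIndependent_iff.mp hindep4
    ![(-(1/2 : ℂ) * u * (((starRingEnd ℂ) A2 + B1) * (A1 + (starRingEnd ℂ) B2))),
      ((1/2 : ℂ) * (starRingEnd ℂ) u
        * (((starRingEnd ℂ) A1 + B2) * (A2 + (starRingEnd ℂ) B1))),
      (-(1/2 : ℂ) * (Complex.I * (r : ℂ) ^ 2)
        * (((starRingEnd ℂ) A1 + B1) * (A1 + (starRingEnd ℂ) B1))),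
      (-(1/2 : ℂ) * (Complex.I * (s : ℂ) ^ 2)
        * (((starRingEnd ℂ) A2 + B2) * (A2 + (starRingEnd ℂ) B2)))]
    (by
      rw [Fin.sum_univ_four]
      simp only [Matrix.cons_val_zero, Matrix.cons_val_one, Matrix.head_cons,
        Matrix.cons_val_two, Matrix.tail_cons, Matrix.cons_val_three]
      rw [← hskt]
      simp only [mul_assoc]) 2
  simp only [Matrix.cons_val_two, Matrix.tail_cons, Matrix.head_cons] at hco
  -- derive A1 + conj B1 = 0
  have hrne : ((r : ℂ)) ^ 2 ≠ 0 := pow_ne_zero _ (Complex.ofReal_ne_zero.mpr hpos.1)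
  have hprod : ((starRingEnd ℂ) A1 + B1) * (A1 + (starRingEnd ℂ) B1) = 0 := by
    have h2 : (-(1/2 : ℂ)) * (Complex.I * (r : ℂ) ^ 2) ≠ 0 := by
      simp [Complex.I_ne_zero, hrne]
    rcases mul_eq_zero.mp hco with h | h
    · exact absurd h h2
    · exact h
  have ha : A1 + (starRingEnd ℂ) B1 = 0 := by
    have hc : (starRingEnd ℂ) (A1 + (starRingEnd ℂ) B1) = (starRingEnd ℂ) A1 + B1 := by
      simp [map_add]
    rw [← hc] at hprod
    have := Complex.normSq_eq_conj_mul_self (z := A1 + (starRingEnd ℂ) B1)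
    rw [← this] at hprod
    have h0 : Complex.normSq (A1 + (starRingEnd ℂ) B1) = 0 := by exact_mod_cast hprod
    exact Complex.normSq_eq_zero.mp h0
  have ha2 : A2 + (starRingEnd ℂ) B2 = 0 := by linear_combination huni - ha
  have hca : (starRingEnd ℂ) A1 + B1 = 0 := by
    have := congrArg (starRingEnd ℂ) ha
    simpa [map_add] using this
  have hca2 : (starRingEnd ℂ) A2 + B2 = 0 := by
    have := congrArg (starRingEnd ℂ) ha2
    simpa [map_add] using this
  -- the Kähler form
  refine ⟨1, 1, 1, 0, 0, 0, ?_, ?_⟩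
  · refine ⟨one_ne_zero, one_ne_zero, one_ne_zero, ?_, ?_, ?_, ?_⟩ <;>
      simp [Complex.normSq]
  · have hF : hermForm ω1 ω2 ω3 ωb1 ωb2 ωb3 1 1 1 0 0 0
        = (1/2 : ℂ) • (Complex.I • (ω1 * ωb1) + Complex.I • (ω2 * ωb2)
            + Complex.I • (ω3 * ωb3)) := by
      rw [hermForm]
      norm_num
    rw [hF, hdpb]
    simp only [map_smul, map_add]
    rw [hdp11, hdp22, hdp33, hdb11, hdb22, hdb33, ha, ha2, hca, hca2]
    simp
end
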